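/- arXiv:2007.15116 — 4 statements merged into one kernel-verified Lean document; each statement's English description precedes it below -/
import Mathlib

section
/- Under the standing hypotheses, assume R is a central β-Galois algebra over R^β. If R satisfies the fundamental theorem, then for any subalgebra S of R that is separable over R^β: V_R(S) = ⊕_{g∈H_S} J_g and S = ⊕_{g∈H_{S'}} J_g, where S' = V_R(S). -/
open scoped BigOperators

attribute [local instance] Classical.propDecidable

universe u v w

/-- A groupoid in the sense of Lawson: a (nonempty) set `G` with a partially defined
binary operation (here totalized: `mul g h` is only meaningful when `d g = r h`),
inverses, and one-sided identities `r g = g * g⁻¹` and `d g = g⁻¹ * g`. -/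
structure Gpd (G : Type*) where
  d : G → G
  r : G → G
  mul : G → G → G
  inv : G → G
  assoc : ∀ g h l, d g = r h → d h = r l → mul (mul g h) l = mul g (mul h l)
  d_mul : ∀ g h, d g = r h → d (mul g h) = d h
  r_mul : ∀ g h, d g = r h → r (mul g h) = r g
  d_inv : ∀ g, d (inv g) = r g
  r_inv : ∀ g, r (inv g) = d g
  inv_inv : ∀ g, inv (inv g) = g
  mul_inv : ∀ g, mul g (inv g) = r g
  inv_mul : ∀ g, mul (inv g) g = d g
  mul_d : ∀ g, mul g (d g) = g
  r_mul_self : ∀ g, mul (r g) g = g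
  d_d : ∀ g, d (d g) = d g
  r_d : ∀ g, r (d g) = d g
  inv_d : ∀ g, inv (d g) = d g

namespace Gpd

variable {G : Type*} (gpd : Gpd G)

/-- The set `G₀` of identities of the groupoid. -/
def idts : Set G := Set.range gpd.d

/-- `H` is a subgroupoid: a nonempty subset closed under inverses and under all
defined products. -/
def IsSubgpd (H : Set G) : Prop :=
  H.Nonempty ∧ (∀ g ∈ H, gpd.inv g ∈ H) ∧
    ∀ g ∈ H, ∀ h ∈ H, gpd.d g = gpd.r h → gpd.mul g h ∈ H

/-- A wide subgroupoid: a subgroupoid containing all the identities of `G`. -/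
def IsWide (H : Set G) : Prop := gpd.IsSubgpd H ∧ gpd.idts ⊆ H

/-- The subgroupoid generated by a subset `X` of `G`: the intersection of all
subgroupoids containing `X`. -/
def gen (X : Set G) : Set G := ⋂₀ {H : Set G | gpd.IsSubgpd H ∧ X ⊆ H}

end Gpd

/-- A unital action `β` of a groupoid `gpd` on a `K`-algebra `R`.  Each ideal
`E_g = E_{r g}` is the unital ideal `R·(one g)` generated by the central idempotent
`one g` (the identity element `1_g` of `E_g`), and `act g` encodes the `K`-algebra
isomorphism `β_g : E_{g⁻¹} → E_g` (only the values `act g (x * one (inv g))` on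
`E_{g⁻¹}` are relevant). -/
structure GpdAct (K : Type*) [CommRing K] (R : Type*) [Ring R] [Algebra K R]
    {G : Type*} (gpd : Gpd G) where
  one : G → R
  one_central : ∀ g x, one g * x = x * one g
  one_idem : ∀ g, one g * one g = one g
  one_r : ∀ g, one g = one (gpd.r g)
  act : G → R → R
  act_mem : ∀ g x, act g (x * one (gpd.inv g)) * one g = act g (x * one (gpd.inv g))
  act_add : ∀ g x y, act g ((x + y) * one (gpd.inv g)) =
      act g (x * one (gpd.inv g)) + act g (y * one (gpd.inv g))
  act_mul : ∀ g x y, act g (x * y * one (gpd.inv g)) =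
      act g (x * one (gpd.inv g)) * act g (y * one (gpd.inv g))
  act_smul : ∀ g (k : K) (x : R),
      act g (k • x * one (gpd.inv g)) = k • act g (x * one (gpd.inv g))
  act_unit : ∀ g, act g (one (gpd.inv g)) = one g
  act_id : ∀ g x, act (gpd.d g) (x * one (gpd.d g)) = x * one (gpd.d g)
  act_comp : ∀ g h x, gpd.d g = gpd.r h →
      act g (act h (x * one (gpd.inv h)) * one (gpd.inv g)) =
        act (gpd.mul g h) (x * one (gpd.inv h))

section Defs

variable {K : Type*} [CommRing K] {R : Type*} [Ring R] [Algebra K R]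
  {G : Type*} (gpd : Gpd G) (β : GpdAct K R gpd)

/-- The invariants `R^{β_H}` of `R` under the restriction of the action to a
subset `H` of `G`: all `x` with `β_h(x 1_{h⁻¹}) = x 1_h` for all `h ∈ H`. -/
def fixedSet (H : Set G) : Set R :=
  {x : R | ∀ h ∈ H, β.act h (x * β.one (gpd.inv h)) = x * β.one h}

/-- `J_g = {t ∈ E_g | t β_g(x 1_{g⁻¹}) = x t for all x ∈ R}`. -/
def Jset (g : G) : Set R :=
  {t : R | t * β.one g = t ∧ ∀ x : R, t * β.act g (x * β.one (gpd.inv g)) = x * t}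

/-- `H_S = {g ∈ G | β_g(s 1_{g⁻¹}) = s 1_g for all s ∈ S}`. -/
def Hset (S : Set R) : Set G :=
  {g : G | ∀ s ∈ S, β.act g (s * β.one (gpd.inv g)) = s * β.one g}

/-- `R = ⊕_{e ∈ G₀} E_e`, i.e. the identity elements of the ideals `E_e`, `e ∈ G₀`,
are pairwise orthogonal central idempotents summing to `1`. -/
def IsDecomp [Fintype G] : Prop :=
  (∑ e : G, if e ∈ gpd.idts then β.one e else 0) = 1 ∧
    ∀ e f : G, e ∈ gpd.idts → f ∈ gpd.idts → e ≠ f → β.one e * β.one f = 0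

/-- `R` is a `β`-Galois extension of `R^β`: there is a Galois coordinate system
`x_i, y_i` with `Σ_i x_i β_g(y_i 1_{g⁻¹}) = δ_{e,g} 1_e` for all `e ∈ G₀`, `g ∈ G`. -/
def IsGaloisExt [Fintype G] : Prop :=
  ∃ (n : ℕ) (x y : Fin n → R), ∀ g : G,
    (∑ i, x i * β.act g (y i * β.one (gpd.inv g))) = if g ∈ gpd.idts then β.one g else 0

/-- `V = ⊕_{g ∈ H} J_g`: every family `(f g)_{g ∈ H}` with `f g ∈ J_g` sums into `V`,
and every element of `V` is in a unique way such a sum (internal direct sum). -/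
def IsDirectSumOver [Fintype G] (H : Set G) (V : Set R) : Prop :=
  (∀ f : G → R, (∀ g, f g ∈ Jset gpd β g) → (∀ g, g ∉ H → f g = 0) → (∑ g, f g) ∈ V) ∧
    ∀ v ∈ V, ∃! f : G → R,
      (∀ g, f g ∈ Jset gpd β g) ∧ (∀ g, g ∉ H → f g = 0) ∧ v = ∑ g, f g

/-- `γ(H) = ⊕_{h ∈ H} J_h`, as the set of all sums `Σ_{h ∈ H} j_h`, `j_h ∈ J_h`. -/
def gammaSet [Fintype G] (H : Set G) : Set R :=
  {v : R | ∃ f : G → R,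
    (∀ g, f g ∈ Jset gpd β g) ∧ (∀ g, g ∉ H → f g = 0) ∧ v = ∑ g, f g}

/-- The product `J_h J_g`: all finite sums of products `a b` with `a ∈ J_h`, `b ∈ J_g`. -/
def JprodSet (h g : G) : Set R :=
  {z : R | ∃ (n : ℕ) (a b : Fin n → R),
    (∀ i, a i ∈ Jset gpd β h) ∧ (∀ i, b i ∈ Jset gpd β g) ∧ z = ∑ i, a i * b i}

end Defs

section Sep

variable {R : Type u} [Ring R]

/-- A biadditive pairing `φ : R × R → N` is `S`-balanced if `φ(u s, v) = φ(u, s v)`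
for all `s ∈ S`.  Such pairings are exactly the additive maps out of `R ⊗_S R`,
so they detect equality in `R ⊗_S R`. -/
def IsBalanced (S : Set R) {N : Type v} [AddCommGroup N] (φ : R →+ R →+ N) : Prop :=
  ∀ u v s : R, s ∈ S → φ (u * s) v = φ u (s * v)

/-- `R` is a separable extension of the subring `S ⊆ R`: there is
`z = Σ_i x_i ⊗ y_i ∈ R ⊗_S R` with `Σ_i x_i y_i = 1` and `a z = z a` for all `a ∈ R`
(the latter expressed via all `S`-balanced pairings, which detect equality in
`R ⊗_S R`). -/
def RSepOver (S : Set R) : Prop :=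
  ∃ (n : ℕ) (x y : Fin n → R), (∑ i, x i * y i) = 1 ∧
    ∀ (N : Type v) [AddCommGroup N] (φ : R →+ R →+ N), IsBalanced S φ →
      ∀ a : R, (∑ i, φ (a * x i) (y i)) = ∑ i, φ (x i) (y i * a)

/-- `R` is a Hirata separable extension of `S`: `R ⊗_S R` is isomorphic as an
`R`-bimodule to a direct summand of a finite direct sum of copies of `R`.
Equivalently (Casimir elements): there are `R`-central elements
`e_k = Σ_i x_{k,i} ⊗ y_{k,i} ∈ (R ⊗_S R)^R` and `a_k ∈ V_R(S)` with
`Σ_k a_k e_k = 1 ⊗ 1` (centrality and the last equation expressed via all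
`S`-balanced pairings, which detect equality in `R ⊗_S R`). -/
def HirataSep (S : Set R) : Prop :=
  ∃ (n m : ℕ) (x y : Fin n → Fin m → R) (a : Fin n → R),
    (∀ k, a k ∈ Set.centralizer S) ∧
    ∀ (N : Type v) [AddCommGroup N] (φ : R →+ R →+ N), IsBalanced S φ →
      (∀ (k : Fin n) (r : R),
        (∑ i, φ (r * x k i) (y k i)) = ∑ i, φ (x k i) (y k i * r)) ∧
      (∑ k, ∑ i, φ (a k * x k i) (y k i)) = φ 1 1

/-- The subring `A` of `R` is a separable extension of the subring `S ⊆ A`: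
there is `z = Σ_i x_i ⊗ y_i ∈ A ⊗_S A` with `Σ_i x_i y_i = 1` and `a z = z a`
for all `a ∈ A`. -/
def SubSepOver (A : Subring R) (S : Set R) : Prop :=
  ∃ (n : ℕ) (x y : Fin n → A), (∑ i, (x i : R) * (y i : R)) = 1 ∧
    ∀ (N : Type v) [AddCommGroup N] (φ : A →+ A →+ N),
      (∀ u v s : A, (s : R) ∈ S → φ (u * s) v = φ u (s * v)) →
      ∀ a : A, (∑ i, φ (a * x i) (y i)) = ∑ i, φ (x i) (y i * a)

end Sep

/-- `R` satisfies the fundamental theorem: the Galois map `θ : H ↦ R^{β_H}` is a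
bijection from the set of wide subgroupoids of `G` onto the set of subalgebras of
`R` which are separable over `R^β`. -/
def SatisfiesFT {K : Type*} [CommRing K] {R : Type u} [Ring R] [Algebra K R]
    {G : Type*} [Fintype G] (gpd : Gpd G) (β : GpdAct K R gpd) : Prop :=
  (∀ H : Set G, gpd.IsWide H → ∃ A : Subring R, (A : Set R) = fixedSet gpd β H ∧
      fixedSet gpd β Set.univ ⊆ (A : Set R) ∧
      SubSepOver.{u, v} A (fixedSet gpd β Set.univ)) ∧
  (∀ H L : Set G, gpd.IsWide H → gpd.IsWide L →
      fixedSet gpd β H = fixedSet gpd β L → H = L) ∧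
  (∀ A : Subring R, fixedSet gpd β Set.univ ⊆ (A : Set R) →
      SubSepOver.{u, v} A (fixedSet gpd β Set.univ) →
      ∃ H : Set G, gpd.IsWide H ∧ fixedSet gpd β H = (A : Set R))

/-!
Galois coordinates `x_i, y_i` yield projections `r ↦ Σ_i x_i r σ_g(y_i)` exhibiting
`R = ⊕_{g ∈ G} J_g`, and make `R` separable over `R^β`. For `S` separable over `R^β` the
fundamental theorem gives `S = R^{β_H}` for some wide `H`, hence `S = R^{β_{H_S}}`. An
element of `V_R(S)` commutes with the traces `tr_{H_S}(y_i) ∈ S`, which forces its components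
outside `H_S` to vanish; this gives `V_R(S) = ⊕_{g ∈ H_S} J_g`.

To apply this to `S' = V_R(S)` one needs `V_R(S)` separable over `R^β` and `V_R(V_R(S)) = S`.
Since `R` is central, `tr(1)` is invertible, hence by Lagrange's theorem in the vertex groups
so is `tr_{H_S}(1)`; with it, the decompositions `1_h ∈ J_{h⁻¹} J_h` for `h ∈ H_S` assemble to
a separability idempotent of `V_R(S)`. The same decompositions show that an element of
`V_R(V_R(S))` is fixed by `H_S`, i.e. lies in `S`.
-/

open Finset

namespace Gpd

variable {G : Type*} (gpd : Gpd G)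

theorem d_mem_idts (g : G) : gpd.d g ∈ gpd.idts := ⟨g, rfl⟩

theorem r_mem_idts (g : G) : gpd.r g ∈ gpd.idts := ⟨gpd.inv g, gpd.d_inv g⟩

variable {gpd}

theorem d_eq_self_of_mem_idts {e : G} (he : e ∈ gpd.idts) : gpd.d e = e := by
  obtain ⟨a, rfl⟩ := he
  exact gpd.d_d a

theorem r_eq_self_of_mem_idts {e : G} (he : e ∈ gpd.idts) : gpd.r e = e := by
  obtain ⟨a, rfl⟩ := he
  exact gpd.r_d a

theorem inv_mul_mul_cancel {g h : G} (hc : gpd.d g = gpd.r h) :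
    gpd.mul (gpd.inv g) (gpd.mul g h) = h := by
  rw [← gpd.assoc _ _ _ (gpd.d_inv g) hc, gpd.inv_mul, hc, gpd.r_mul_self]

theorem mul_inv_mul_cancel {g h : G} (hc : gpd.r g = gpd.r h) :
    gpd.mul g (gpd.mul (gpd.inv g) h) = h := by
  rw [← gpd.assoc _ _ _ (gpd.r_inv g).symm (by rw [gpd.d_inv, hc]), gpd.mul_inv, hc,
    gpd.r_mul_self]

theorem eq_of_inv_mul_mem_idts {g h : G} (hc : gpd.r g = gpd.r h)
    (hid : gpd.mul (gpd.inv g) h ∈ gpd.idts) : h = g := by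
  have hd : gpd.mul (gpd.inv g) h = gpd.d g := by
    rw [← r_eq_self_of_mem_idts hid, gpd.r_mul _ _ (by rw [gpd.d_inv, hc]), gpd.r_inv]
  rw [← mul_inv_mul_cancel hc, hd, gpd.mul_d]

theorem eq_d_of_mul_eq_self {g h : G} (hc : gpd.d h = gpd.r g) (he : gpd.mul h g = h) :
    g = gpd.d h := by
  rw [← inv_mul_mul_cancel hc, he, gpd.inv_mul]

theorem mul_inv_rev {a b : G} (hc : gpd.d a = gpd.r b) :
    gpd.inv (gpd.mul a b) = gpd.mul (gpd.inv b) (gpd.inv a) := by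
  have hba : gpd.d (gpd.inv b) = gpd.r (gpd.inv a) := by rw [gpd.d_inv, gpd.r_inv, hc]
  have hcancel : gpd.mul (gpd.mul a b) (gpd.mul (gpd.inv b) (gpd.inv a)) =
      gpd.r (gpd.mul a b) := by
    rw [gpd.assoc a b _ hc (by rw [gpd.r_mul _ _ hba, gpd.r_inv]),
      mul_inv_mul_cancel (by rw [gpd.r_inv, hc]), gpd.mul_inv, gpd.r_mul a b hc]
  have hd : gpd.d (gpd.inv (gpd.mul a b)) = gpd.r (gpd.mul a b) := gpd.d_inv _
  rw [← inv_mul_mul_cancel (g := gpd.mul a b) (h := gpd.mul (gpd.inv b) (gpd.inv a))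
    (by rw [gpd.d_mul a b hc, gpd.r_mul _ _ hba, gpd.r_inv]), hcancel, ← hd, gpd.mul_d]

theorem conj_mem_idts {g k : G} (hloop : gpd.d g = gpd.r g) (hck : gpd.d k = gpd.r g)
    (hm : gpd.mul (gpd.mul k g) (gpd.inv k) ∈ gpd.idts) : g ∈ gpd.idts := by
  have hkg : gpd.d (gpd.mul k g) = gpd.r (gpd.inv k) := by
    rw [gpd.d_mul k g hck, gpd.r_inv, hloop, ← hck]
  have hm_eq : gpd.mul (gpd.mul k g) (gpd.inv k) = gpd.r k := by
    rw [← r_eq_self_of_mem_idts hm, gpd.r_mul _ _ hkg, gpd.r_mul k g hck]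
  have hkg_eq : gpd.mul k g = k := by
    rw [← gpd.mul_d (gpd.mul k g), gpd.d_mul k g hck, hloop, ← hck, ← gpd.inv_mul k,
      ← gpd.assoc _ _ _ hkg (gpd.d_inv k), hm_eq, gpd.r_mul_self]
  rw [eq_d_of_mul_eq_self hck hkg_eq]
  exact gpd.d_mem_idts k

abbrev vertexGroup {e : G} (he : e ∈ gpd.idts) : Group {g : G // gpd.d g = e ∧ gpd.r g = e} where
  mul a b := ⟨gpd.mul a.1 b.1, by rw [gpd.d_mul _ _ (a.2.1.trans b.2.2.symm), b.2.1],
    by rw [gpd.r_mul _ _ (a.2.1.trans b.2.2.symm), a.2.2]⟩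
  one := ⟨e, d_eq_self_of_mem_idts he, r_eq_self_of_mem_idts he⟩
  inv a := ⟨gpd.inv a.1, by rw [gpd.d_inv, a.2.2], by rw [gpd.r_inv, a.2.1]⟩
  mul_assoc a b c := Subtype.ext
    (gpd.assoc a.1 b.1 c.1 (a.2.1.trans b.2.2.symm) (b.2.1.trans c.2.2.symm))
  one_mul a := Subtype.ext
    ((congrArg (gpd.mul · a.1) a.2.2).symm.trans (gpd.r_mul_self a.1))
  mul_one a := Subtype.ext ((congrArg (gpd.mul a.1) a.2.1).symm.trans (gpd.mul_d a.1))
  inv_mul_cancel a := Subtype.ext (by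
    show gpd.mul (gpd.inv a.1) a.1 = e
    rw [gpd.inv_mul, a.2.1])

theorem card_loops_dvd {e : G} (he : e ∈ gpd.idts) {H : Set G} (hH : gpd.IsWide H) :
    Nat.card {g : G // (gpd.d g = e ∧ gpd.r g = e) ∧ g ∈ H} ∣
      Nat.card {g : G // (gpd.d g = e ∧ gpd.r g = e) ∧ g ∈ Set.univ} := by
  let _ := vertexGroup he
  let L : Subgroup {g : G // gpd.d g = e ∧ gpd.r g = e} :=
    { carrier := {a | a.1 ∈ H}
      mul_mem' := fun {a b} ha hb => hH.1.2.2 a.1 ha b.1 hb (a.2.1.trans b.2.2.symm)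
      one_mem' := hH.2 he
      inv_mem' := fun {a} ha => hH.1.2.1 a.1 ha }
  have hL : Nat.card L = Nat.card {g : G // (gpd.d g = e ∧ gpd.r g = e) ∧ g ∈ H} :=
    Nat.card_congr ⟨fun a => ⟨a.1.1, a.1.2, a.2⟩, fun b => ⟨⟨b.1, b.2.1⟩, b.2.2⟩,
      fun _ => rfl, fun _ => rfl⟩
  have huniv : Nat.card {g : G // gpd.d g = e ∧ gpd.r g = e} =
      Nat.card {g : G // (gpd.d g = e ∧ gpd.r g = e) ∧ g ∈ Set.univ} :=
    Nat.card_congr (Equiv.subtypeEquivRight fun g => by simp)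
  rw [← hL, ← huniv]
  exact Subgroup.card_subgroup_dvd_card L

theorem sum_comp_inv_mul [Fintype G] {M : Type*} [AddCommMonoid M] {H : Set G}
    (hH : gpd.IsSubgpd H) {m : G} (hm : m ∈ H) (hloop : gpd.d m = gpd.r m) (f : G → M) :
    ∑ h ∈ univ.filter (fun h => h ∈ H ∧ gpd.r h = gpd.r m), f (gpd.mul (gpd.inv m) h) =
      ∑ h ∈ univ.filter (fun h => h ∈ H ∧ gpd.r h = gpd.r m), f h := by
  refine sum_nbij' (gpd.mul (gpd.inv m)) (gpd.mul m) ?_ ?_ ?_ ?_ fun _ _ => rfl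
  · intro h hh
    obtain ⟨hH', hrh⟩ := (mem_filter.mp hh).2
    have hc : gpd.d (gpd.inv m) = gpd.r h := by rw [gpd.d_inv, hrh]
    exact mem_filter.mpr ⟨mem_univ _, hH.2.2 _ (hH.2.1 m hm) h hH' hc,
      by rw [gpd.r_mul _ _ hc, gpd.r_inv, hloop]⟩
  · intro h hh
    obtain ⟨hH', hrh⟩ := (mem_filter.mp hh).2
    have hc : gpd.d m = gpd.r h := by rw [hloop, hrh]
    exact mem_filter.mpr ⟨mem_univ _, hH.2.2 m hm h hH' hc, gpd.r_mul _ _ hc⟩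
  · exact fun h hh => mul_inv_mul_cancel (mem_filter.mp hh).2.2.symm
  · exact fun h hh => inv_mul_mul_cancel (by rw [hloop, (mem_filter.mp hh).2.2])

end Gpd

namespace GpdAct

variable {K : Type*} [CommRing K] {R : Type*} [Ring R] [Algebra K R]
  {G : Type*} {gpd : Gpd G} (β : GpdAct K R gpd)

/-- `σ_g(w) = β_g(w 1_{g⁻¹})`: the isomorphism `β_g`, extended by zero to all of `R`. -/
def σ (g : G) : R →ₙ+* R where
  toFun w := β.act g (w * β.one (gpd.inv g))
  map_mul' := β.act_mul g
  map_zero' := by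
    have h := β.act_add g 0 0
    rwa [add_zero, left_eq_add] at h
  map_add' := β.act_add g

theorem σ_apply (g : G) (w : R) : β.σ g w = β.act g (w * β.one (gpd.inv g)) := rfl

theorem mem_Jset_iff {g : G} {t : R} :
    t ∈ Jset gpd β g ↔ t * β.one g = t ∧ ∀ w, t * β.σ g w = w * t := Iff.rfl

theorem σ_of_mem_fixedSet {H : Set G} {w : R} (hw : w ∈ fixedSet gpd β H) {g : G}
    (hg : g ∈ H) : β.σ g w = w * β.one g := hw g hg

theorem mul_σ_of_mem_Jset {g : G} {t : R} (ht : t ∈ Jset gpd β g) (w : R) :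
    t * β.σ g w = w * t := ht.2 w

theorem σ_of_mem_Hset {S : Set R} {g : G} (hg : g ∈ Hset gpd β S) {s : R} (hs : s ∈ S) :
    β.σ g s = s * β.one g := hg s hs

theorem σ_mul_one (g : G) (w : R) : β.σ g w * β.one g = β.σ g w := β.act_mem g w

theorem one_mul_σ (g : G) (w : R) : β.one g * β.σ g w = β.σ g w := by
  rw [β.one_central, σ_mul_one]

theorem one_inv (g : G) : β.one (gpd.inv g) = β.one (gpd.d g) := by
  rw [β.one_r (gpd.inv g), gpd.r_inv]

theorem σ_mul_one_inv (g : G) (w : R) : β.σ g (w * β.one (gpd.inv g)) = β.σ g w := by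
  rw [σ_apply, σ_apply, mul_assoc, β.one_idem]

theorem σ_one (g : G) : β.σ g 1 = β.one g := by
  rw [σ_apply, one_mul, β.act_unit]

theorem σ_one_d (g : G) : β.σ g (β.one (gpd.d g)) = β.one g := by
  rw [← one_inv, ← one_mul (β.one _), σ_mul_one_inv, σ_one]

theorem σ_σ {k g : G} (hc : gpd.d k = gpd.r g) (w : R) :
    β.σ k (β.σ g w) = β.σ (gpd.mul k g) w := by
  rw [σ_apply, σ_apply, σ_apply, one_inv β (gpd.mul k g), gpd.d_mul k g hc, ← one_inv]
  exact β.act_comp k g w hc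

theorem σ_of_mem_idts {e : G} (he : e ∈ gpd.idts) (w : R) : β.σ e w = w * β.one e := by
  obtain ⟨a, rfl⟩ := he
  rw [σ_apply, gpd.inv_d]
  exact β.act_id a w

theorem σ_inv_σ (g : G) (w : R) : β.σ (gpd.inv g) (β.σ g w) = w * β.one (gpd.inv g) := by
  rw [σ_σ β (by rw [gpd.d_inv]) w, gpd.inv_mul, σ_of_mem_idts β (gpd.d_mem_idts g),
    ← one_inv]

theorem σ_σ_inv (g : G) (w : R) : β.σ g (β.σ (gpd.inv g) w) = w * β.one g := by
  rw [σ_σ β (by rw [gpd.r_inv]) w, gpd.mul_inv, σ_of_mem_idts β (gpd.r_mem_idts g),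
    ← β.one_r]

theorem σ_eq_zero {k : G} {w : R} (hw : w * β.one (gpd.inv k) = 0) : β.σ k w = 0 := by
  rw [← σ_mul_one_inv, hw, map_zero]

theorem σ_mul_left_of_mem_fixedSet {c : R} (hc : c ∈ fixedSet gpd β Set.univ) (g : G) (v : R) :
    β.σ g (c * v) = c * β.σ g v := by
  rw [map_mul, β.σ_of_mem_fixedSet hc (Set.mem_univ g), mul_assoc, one_mul_σ]

theorem σ_mul_right_of_mem_fixedSet {c : R} (hc : c ∈ fixedSet gpd β Set.univ) (g : G) (v : R) :
    β.σ g (v * c) = β.σ g v * c := by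
  rw [map_mul, β.σ_of_mem_fixedSet hc (Set.mem_univ g), ← β.one_central, ← mul_assoc,
    σ_mul_one]

section Trace

variable [Fintype G]

noncomputable def trace (H : Set G) : R →+ R :=
  AddMonoidHom.mk' (fun w => ∑ h ∈ univ.filter (· ∈ H), β.σ h w)
    (fun a b => by simp only [map_add, sum_add_distrib])

theorem trace_apply (H : Set G) (w : R) :
    β.trace H w = ∑ h ∈ univ.filter (· ∈ H), β.σ h w := rfl

theorem trace_univ (w : R) : β.trace Set.univ w = ∑ g, β.σ g w := by
  simp only [trace_apply, Set.mem_univ, filter_true]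

theorem trace_mul_of_mem_fixedSet (H : Set G) {c : R} (hc : c ∈ fixedSet gpd β Set.univ)
    (w : R) : β.trace H (c * w) = c * β.trace H w := by
  simp only [trace_apply, mul_sum, σ_mul_left_of_mem_fixedSet β hc]

end Trace

variable {β}

theorem commute_of_mem_fixedSet (hcen : fixedSet gpd β Set.univ = Set.center R) {w : R}
    (hw : w ∈ fixedSet gpd β Set.univ) (u : R) : w * u = u * w := by
  rw [hcen] at hw
  exact (Semigroup.mem_center_iff.mp hw u).symm

theorem mem_fixedSet_of_commute (hcen : fixedSet gpd β Set.univ = Set.center R) {w : R}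
    (hw : ∀ u, w * u = u * w) : w ∈ fixedSet gpd β Set.univ := by
  rw [hcen]
  exact Semigroup.mem_center_iff.mpr fun u => (hw u).symm

theorem one_mem_fixedSet (hcen : fixedSet gpd β Set.univ = Set.center R) (k : G) :
    β.one k ∈ fixedSet gpd β Set.univ :=
  mem_fixedSet_of_commute hcen (β.one_central k)

theorem zero_mem_Jset (g : G) : (0 : R) ∈ Jset gpd β g :=
  ⟨zero_mul _, fun w => by rw [zero_mul, mul_zero]⟩

theorem one_inv_mul_of_mem_Jset {g : G} {t : R} (ht : t ∈ Jset gpd β g) :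
    β.one (gpd.inv g) * t = t := by
  have h := β.mul_σ_of_mem_Jset ht (β.one (gpd.inv g))
  rw [← one_mul (β.one (gpd.inv g)), σ_mul_one_inv, σ_one, ht.1, one_mul] at h
  exact h.symm

theorem mul_mem_Jset {a b : G} {t u : R} (ht : t ∈ Jset gpd β a) (hu : u ∈ Jset gpd β b)
    (hc : gpd.d b = gpd.r a) : t * u ∈ Jset gpd β (gpd.mul b a) := by
  refine β.mem_Jset_iff.mpr ⟨?_, fun w => ?_⟩
  · rw [β.one_r (gpd.mul b a), gpd.r_mul b a hc, ← β.one_r b, mul_assoc, hu.1]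
  · rw [← β.σ_σ hc, mul_assoc, β.mul_σ_of_mem_Jset hu, ← mul_assoc, β.mul_σ_of_mem_Jset ht,
      mul_assoc]

theorem mem_fixedSet_of_mem_Jset_idts (hcen : fixedSet gpd β Set.univ = Set.center R)
    {e : G} (he : e ∈ gpd.idts) {t : R} (ht : t ∈ Jset gpd β e) :
    t ∈ fixedSet gpd β Set.univ := by
  refine mem_fixedSet_of_commute hcen fun u => ?_
  rw [← β.mul_σ_of_mem_Jset ht u, σ_of_mem_idts β he, ← β.one_central, ← mul_assoc, ht.1]

theorem σ_mem_Jset_conj {g k : G} {t : R} (ht : t ∈ Jset gpd β g)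
    (hloop : gpd.d g = gpd.r g) (hc : gpd.d k = gpd.r g) :
    β.σ k t ∈ Jset gpd β (gpd.mul (gpd.mul k g) (gpd.inv k)) := by
  have hkg : gpd.d (gpd.mul k g) = gpd.r (gpd.inv k) := by
    rw [gpd.d_mul k g hc, gpd.r_inv, hloop, ← hc]
  refine β.mem_Jset_iff.mpr ⟨?_, fun w => ?_⟩
  · rw [β.one_r, gpd.r_mul _ _ hkg, gpd.r_mul k g hc, ← β.one_r, σ_mul_one]
  · rw [← β.σ_σ hkg, ← β.σ_σ hc, ← map_mul, β.mul_σ_of_mem_Jset ht, map_mul, σ_σ_inv,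
      mul_assoc, one_mul_σ]

theorem commute_of_mem_Jset_of_mem_Hset {S : Set R} {g : G} (hg : g ∈ Hset gpd β S) {t : R}
    (ht : t ∈ Jset gpd β g) {s : R} (hs : s ∈ S) : t * s = s * t := by
  rw [← β.mul_σ_of_mem_Jset ht s, β.σ_of_mem_Hset hg hs, ← β.one_central, ← mul_assoc, ht.1]

theorem isWide_Hset [Nonempty G] (S : Set R) : gpd.IsWide (Hset gpd β S) := by
  have hidts : gpd.idts ⊆ Hset gpd β S := fun e he s _ => β.σ_of_mem_idts he s
  refine ⟨⟨⟨_, hidts (gpd.d_mem_idts (Classical.arbitrary G))⟩, ?_, ?_⟩, hidts⟩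
  · intro g hg s hs
    change β.σ (gpd.inv g) s = s * β.one (gpd.inv g)
    have h := β.σ_mul_one_inv (gpd.inv g) s
    rw [gpd.inv_inv] at h
    rw [← h, ← β.σ_of_mem_Hset hg hs, σ_inv_σ]
  · intro g hg h hh hc s hs
    change β.σ (gpd.mul g h) s = s * β.one (gpd.mul g h)
    rw [← β.σ_σ hc, β.σ_of_mem_Hset hh hs, β.one_r h, ← hc, ← one_inv, σ_mul_one_inv,
      β.σ_of_mem_Hset hg hs, β.one_r (gpd.mul g h),
      gpd.r_mul g h hc, ← β.one_r]

theorem fixedSet_Hset_fixedSet (H : Set G) :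
    fixedSet gpd β (Hset gpd β (fixedSet gpd β H)) = fixedSet gpd β H :=
  Set.Subset.antisymm (fun _ hw h hh => hw h fun _ hs => hs h hh) fun _ hs _ hg => hg _ hs

theorem mem_centralizer_of_mem_Jset {S : Set R} {g : G} (hg : g ∈ Hset gpd β S) {t : R}
    (ht : t ∈ Jset gpd β g) : t ∈ Set.centralizer S :=
  fun _ hs => (commute_of_mem_Jset_of_mem_Hset hg ht hs).symm

theorem mem_centralizer_of_mem_fixedSet (hcen : fixedSet gpd β Set.univ = Set.center R)
    {w : R} (hw : w ∈ fixedSet gpd β Set.univ) (S : Set R) : w ∈ Set.centralizer S :=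
  fun u _ => (commute_of_mem_fixedSet hcen hw u).symm

section Decomp

variable [Fintype G]

theorem one_mul_one_eq_zero (hdec : IsDecomp gpd β) {g h : G} (hne : gpd.r g ≠ gpd.r h) :
    β.one g * β.one h = 0 := by
  rw [β.one_r g, β.one_r h]
  exact hdec.2 _ _ (gpd.r_mem_idts g) (gpd.r_mem_idts h) hne

theorem one_mul_one_d_eq_zero (hdec : IsDecomp gpd β) {g k : G} (hne : gpd.r g ≠ gpd.d k) :
    β.one g * β.one (gpd.d k) = 0 :=
  one_mul_one_eq_zero hdec (by rwa [gpd.r_d])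

theorem σ_σ_eq_zero (hdec : IsDecomp gpd β) {k g : G} (hne : gpd.d k ≠ gpd.r g) (w : R) :
    β.σ k (β.σ g w) = 0 := by
  apply β.σ_eq_zero
  rw [← σ_mul_one, one_inv, mul_assoc, one_mul_one_d_eq_zero hdec (Ne.symm hne), mul_zero]

theorem sum_one_idts (hdec : IsDecomp gpd β) :
    ∑ e ∈ univ.filter (· ∈ gpd.idts), β.one e = 1 := by
  rw [sum_filter]
  exact hdec.1

/-- `σ_k` permutes the summands via `h ↦ k h`; those with `r h ≠ d k` are killed on both sides
by the orthogonality of the `1_e`. -/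
theorem trace_mem_fixedSet (hdec : IsDecomp gpd β) {H : Set G}
    (hinv : ∀ g ∈ H, gpd.inv g ∈ H)
    (hmul : ∀ g ∈ H, ∀ h ∈ H, gpd.d g = gpd.r h → gpd.mul g h ∈ H) (w : R) :
    β.trace H w ∈ fixedSet gpd β H := by
  intro k hk
  change β.σ k (β.trace H w) = β.trace H w * β.one k
  have hL : β.σ k (β.trace H w) =
      ∑ h ∈ (univ.filter (· ∈ H)).filter (fun h => gpd.r h = gpd.d k),
        β.σ (gpd.mul k h) w := by
    rw [trace_apply, map_sum, ← sum_filter_add_sum_filter_not _ (fun h => gpd.r h = gpd.d k),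
      sum_eq_zero (s := filter (fun h => ¬gpd.r h = gpd.d k) _), add_zero]
    · exact sum_congr rfl fun h hh => β.σ_σ (mem_filter.mp hh).2.symm w
    · exact fun h hh => σ_σ_eq_zero hdec (Ne.symm (mem_filter.mp hh).2) w
  have hR : β.trace H w * β.one k =
      ∑ h ∈ (univ.filter (· ∈ H)).filter (fun h => gpd.r h = gpd.r k), β.σ h w := by
    rw [trace_apply, sum_mul, ← sum_filter_add_sum_filter_not _ (fun h => gpd.r h = gpd.r k),
      sum_eq_zero (s := filter (fun h => ¬gpd.r h = gpd.r k) _), add_zero]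
    · refine sum_congr rfl fun h hh => ?_
      rw [β.one_r k, ← (mem_filter.mp hh).2, ← β.one_r, σ_mul_one]
    · intro h hh
      rw [← σ_mul_one, mul_assoc, one_mul_one_eq_zero hdec (mem_filter.mp hh).2, mul_zero]
  rw [hL, hR]
  refine sum_nbij' (gpd.mul k ·) (gpd.mul (gpd.inv k) ·) ?_ ?_ ?_ ?_ fun _ _ => rfl
  · simp only [mem_filter, mem_univ, true_and]
    exact fun h hh => ⟨hmul k hk h hh.1 hh.2.symm, gpd.r_mul k h hh.2.symm⟩
  · simp only [mem_filter, mem_univ, true_and]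
    intro h hh
    have hc : gpd.d (gpd.inv k) = gpd.r h := by rw [gpd.d_inv, hh.2]
    exact ⟨hmul _ (hinv k hk) h hh.1 hc, by rw [gpd.r_mul _ _ hc, gpd.r_inv]⟩
  · exact fun h hh => Gpd.inv_mul_mul_cancel (mem_filter.mp hh).2.symm
  · exact fun h hh => Gpd.mul_inv_mul_cancel (mem_filter.mp hh).2.symm

theorem trace_univ_mem_fixedSet (hdec : IsDecomp gpd β) (w : R) :
    β.trace Set.univ w ∈ fixedSet gpd β Set.univ :=
  trace_mem_fixedSet hdec (fun _ _ => Set.mem_univ _) (fun _ _ _ _ _ => Set.mem_univ _) w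

/-- `1_g = σ_g(1_{d g})` and `1_{d g}` is central, hence fixed:
`1_g = 1_{d g} 1_g = 1_{d g} 1_{r g}`. -/
theorem one_eq_zero_of_d_ne_r (hdec : IsDecomp gpd β)
    (hcen : fixedSet gpd β Set.univ = Set.center R) {g : G} (hne : gpd.d g ≠ gpd.r g) :
    β.one g = 0 := by
  have h := β.σ_of_mem_fixedSet (one_mem_fixedSet hcen (gpd.d g)) (Set.mem_univ g)
  rw [σ_one_d, β.one_r g] at h
  rw [β.one_r g, h]
  exact hdec.2 _ _ (gpd.d_mem_idts g) (gpd.r_mem_idts g) hne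

theorem mul_eq_zero_of_mem_Jset (hdec : IsDecomp gpd β) {a b : G} {t u : R}
    (ht : t ∈ Jset gpd β a) (hu : u ∈ Jset gpd β b) (hne : gpd.r a ≠ gpd.d b) : t * u = 0 := by
  calc t * u = t * (β.one a * β.one (gpd.inv b)) * u := by
        rw [← mul_assoc, ht.1, mul_assoc, one_inv_mul_of_mem_Jset hu]
    _ = 0 := by rw [one_inv, one_mul_one_d_eq_zero hdec hne, mul_zero, zero_mul]

theorem eq_zero_of_mem_Jset (hdec : IsDecomp gpd β)
    (hcen : fixedSet gpd β Set.univ = Set.center R) {g : G} (hne : gpd.d g ≠ gpd.r g)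
    {t : R} (ht : t ∈ Jset gpd β g) : t = 0 := by
  rw [← ht.1, one_eq_zero_of_d_ne_r hdec hcen hne, mul_zero]

theorem one_mul_one_of_mem_idts (hdec : IsDecomp gpd β)
    (hcen : fixedSet gpd β Set.univ = Set.center R) {e : G} (he : e ∈ gpd.idts) (g : G) :
    β.one g * β.one e = if gpd.d g = e ∧ gpd.r g = e then β.one e else 0 := by
  by_cases hr : gpd.r g = e
  · by_cases hdg : gpd.d g = gpd.r g
    · rw [if_pos ⟨hdg.trans hr, hr⟩, β.one_r g, hr, β.one_idem]
    · rw [if_neg fun h => hdg (h.1.trans h.2.symm), one_eq_zero_of_d_ne_r hdec hcen hdg,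
        zero_mul]
  · rw [if_neg fun h => hr h.2, β.one_r g]
    exact hdec.2 _ _ (gpd.r_mem_idts g) he hr

theorem trace_one_mul_one (hdec : IsDecomp gpd β)
    (hcen : fixedSet gpd β Set.univ = Set.center R) {e : G} (he : e ∈ gpd.idts) (H : Set G) :
    β.trace H 1 * β.one e =
      Nat.card {g : G // (gpd.d g = e ∧ gpd.r g = e) ∧ g ∈ H} • β.one e := by
  rw [trace_apply, sum_mul, Nat.card_eq_fintype_card, Fintype.card_subtype, ← sum_const,
    sum_filter, sum_filter]
  refine sum_congr rfl fun g _ => ?_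
  rw [σ_one, one_mul_one_of_mem_idts hdec hcen he g]
  by_cases hg : g ∈ H <;> by_cases hl : gpd.d g = e ∧ gpd.r g = e <;> simp [hg, hl]

end Decomp

end GpdAct

theorem IsBalanced.sum_pairing_mul_eq {A : Type*} [Ring A] {N : Type*} [AddCommGroup N]
    {T : Set A} {φ : A →+ A →+ N} (hφ : IsBalanced T φ) {ι κ : Type*} [Fintype ι] [Fintype κ]
    {a : A} {X Y : ι → A} {X' Y' : κ → A} (C : κ → ι → A) (hC : ∀ l k, C l k ∈ T)
    (hX : ∀ k, a * X k = ∑ l, X' l * C l k) (hY : ∀ l, ∑ k, C l k * Y k = Y' l * a) :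
    ∑ k, φ (a * X k) (Y k) = ∑ l, φ (X' l) (Y' l * a) := by
  calc ∑ k, φ (a * X k) (Y k) = ∑ k, ∑ l, φ (X' l) (C l k * Y k) := by
        refine sum_congr rfl fun k _ => ?_
        rw [hX, map_sum, AddMonoidHom.finsetSum_apply]
        exact sum_congr rfl fun l _ => hφ _ _ _ (hC l k)
    _ = ∑ l, φ (X' l) (Y' l * a) := by
        rw [sum_comm]
        exact sum_congr rfl fun l _ => by rw [← map_sum, hY]

theorem subSepOver_of_fintype {R : Type u} [Ring R] {A : Subring R} {S : Set R} {ι : Type*}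
    [Fintype ι] (x y : ι → A) (hxy : ∑ i, (x i : R) * y i = 1)
    (hcomm : ∀ (N : Type v) [AddCommGroup N] (φ : A →+ A →+ N),
      IsBalanced (Subtype.val ⁻¹' S) φ → ∀ a, ∑ i, φ (a * x i) (y i) = ∑ i, φ (x i) (y i * a)) :
    SubSepOver.{u, v} A S := by
  let e := Fintype.equivFin ι
  refine ⟨Fintype.card ι, x ∘ e.symm, y ∘ e.symm, ?_, fun N _ φ hφ a => ?_⟩
  · rw [← hxy]
    exact Fintype.sum_equiv e.symm _ _ fun _ => rfl
  · calc ∑ i, φ (a * (x ∘ e.symm) i) ((y ∘ e.symm) i) = ∑ i, φ (a * x i) (y i) :=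
          Fintype.sum_equiv e.symm _ _ fun _ => rfl
      _ = ∑ i, φ (x i) (y i * a) := hcomm N φ hφ a
      _ = _ := (Fintype.sum_equiv e.symm _ _ fun _ => rfl).symm

section Coordinates

variable {K : Type*} [CommRing K] {R : Type*} [Ring R] [Algebra K R]
  {G : Type*} {gpd : Gpd G}

structure GaloisCoords (β : GpdAct K R gpd) where
  n : ℕ
  x : Fin n → R
  y : Fin n → R
  sum_mul_σ : ∀ g, ∑ i, x i * β.σ g (y i) = if g ∈ gpd.idts then β.one g else 0

namespace GaloisCoords

open GpdAct

variable {β : GpdAct K R gpd} (c : GaloisCoords β)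

theorem sum_x_mul_y_mul_one {e : G} (he : e ∈ gpd.idts) :
    (∑ i, c.x i * c.y i) * β.one e = β.one e := by
  simpa only [sum_mul, mul_assoc, σ_of_mem_idts β he, if_pos he] using c.sum_mul_σ e

/-- The projection of `R = ⊕_g J_g` onto `J_g`. -/
def proj (g : G) : R →+ R :=
  AddMonoidHom.mk' (fun r => ∑ i, c.x i * r * β.σ g (c.y i))
    (fun a b => by simp only [mul_add, add_mul, sum_add_distrib])

theorem proj_apply (g : G) (r : R) : c.proj g r = ∑ i, c.x i * r * β.σ g (c.y i) := rfl

/-- The analogous map onto `J_{g⁻¹}` with the roles of `x` and `y` exchanged. -/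
def coproj (g : G) : R →+ R :=
  AddMonoidHom.mk' (fun r => ∑ i, β.σ g (c.x i) * r * c.y i)
    (fun a b => by simp only [mul_add, add_mul, sum_add_distrib])

theorem coproj_apply (g : G) (r : R) : c.coproj g r = ∑ i, β.σ g (c.x i) * r * c.y i := rfl

def sandwich : R →+ R :=
  AddMonoidHom.mk' (fun w => ∑ i, c.x i * w * c.y i)
    (fun a b => by simp only [mul_add, add_mul, sum_add_distrib])

theorem sandwich_apply (w : R) : c.sandwich w = ∑ i, c.x i * w * c.y i := rfl

def kappa : R := ∑ j, c.sandwich (c.x j) * c.y j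

theorem sandwich_mul_of_mem_fixedSet (hcen : fixedSet gpd β Set.univ = Set.center R) {a : R}
    (ha : a ∈ fixedSet gpd β Set.univ) (w : R) : c.sandwich (w * a) = c.sandwich w * a := by
  simp only [sandwich_apply, sum_mul, mul_assoc, commute_of_mem_fixedSet hcen ha]

theorem proj_of_mem_idts {e : G} (he : e ∈ gpd.idts) (r : R) :
    c.proj e r = c.sandwich r * β.one e := by
  simp only [proj_apply, sandwich_apply, sum_mul, σ_of_mem_idts β he, mul_assoc]

def splitRight (h : G) (k : Fin c.n) : R := c.proj h (c.y k)

variable [Fintype G]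

theorem sum_x_mul_y (hdec : IsDecomp gpd β) : ∑ i, c.x i * c.y i = 1 := by
  rw [← mul_one (∑ i, _), ← sum_one_idts hdec, mul_sum]
  exact sum_congr rfl fun e he => c.sum_x_mul_y_mul_one (mem_filter.mp he).2

theorem sum_x_mul_trace (hdec : IsDecomp gpd β) {H : Set G} (hH : gpd.idts ⊆ H) (r : R) :
    ∑ i, c.x i * β.trace H (c.y i * r) = r := by
  have hterm : ∀ h, ∑ i, c.x i * β.σ h (c.y i * r) =
      if h ∈ gpd.idts then r * β.one h else 0 := by
    intro h
    simp only [map_mul, ← mul_assoc, ← sum_mul, c.sum_mul_σ]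
    split_ifs with hh
    · rw [σ_of_mem_idts β hh, ← β.one_central, ← mul_assoc, β.one_idem]
    · rw [zero_mul]
  simp only [trace_apply, mul_sum]
  rw [sum_comm, sum_congr rfl fun h _ => hterm h]
  conv_rhs => rw [← mul_one r, ← sum_one_idts hdec, mul_sum]
  rw [sum_filter, sum_filter]
  refine sum_congr rfl fun h _ => ?_
  by_cases hh : h ∈ gpd.idts
  · simp [hh, hH hh]
  · simp [hh]

theorem sum_σx_mul_σy (hdec : IsDecomp gpd β) (g h : G) :
    ∑ i, β.σ g (c.x i) * β.σ h (c.y i) = if g = h then β.one g else 0 := by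
  by_cases hr : gpd.r g = gpd.r h
  · have hc : gpd.d g = gpd.r (gpd.mul (gpd.inv g) h) := by
      rw [gpd.r_mul _ _ (by rw [gpd.d_inv, hr]), gpd.r_inv]
    have hsum : ∑ i, β.σ g (c.x i) * β.σ h (c.y i) =
        β.σ g (if gpd.mul (gpd.inv g) h ∈ gpd.idts then β.one (gpd.mul (gpd.inv g) h) else 0) := by
      rw [← c.sum_mul_σ, map_sum]
      refine sum_congr rfl fun i _ => ?_
      rw [map_mul, β.σ_σ hc, Gpd.mul_inv_mul_cancel hr]
    rw [hsum]
    split_ifs with hm hgh hgh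
    · rw [← hgh, gpd.inv_mul, σ_one_d]
    · exact absurd (Gpd.eq_of_inv_mul_mem_idts hr hm).symm hgh
    · exact absurd (by rw [← hgh, gpd.inv_mul]; exact gpd.d_mem_idts g) hm
    · exact map_zero _
  · rw [if_neg fun hgh => hr (by rw [hgh])]
    refine sum_eq_zero fun i _ => ?_
    rw [← σ_mul_one, ← one_mul_σ β h, mul_assoc, ← mul_assoc (β.one g),
      one_mul_one_eq_zero hdec hr, zero_mul, mul_zero]

theorem sum_σx_mul_y (hdec : IsDecomp gpd β) (g : G) :
    ∑ i, β.σ g (c.x i) * c.y i = if g ∈ gpd.idts then β.one g else 0 := by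
  split_ifs with hg
  · simp only [σ_of_mem_idts β hg, mul_assoc, β.one_central _ (c.y _)]
    simpa only [← mul_assoc, ← sum_mul] using c.sum_x_mul_y_mul_one hg
  · set z := ∑ i, β.σ g (c.x i) * c.y i
    rw [← c.sum_x_mul_trace hdec (Set.subset_univ _) z]
    refine sum_eq_zero fun j _ => ?_
    rw [trace_univ, sum_eq_zero, mul_zero]
    intro h _
    simp only [z, map_mul, map_sum]
    by_cases hc : gpd.d h = gpd.r g
    · have hne : gpd.mul h g ≠ h := fun he =>
        hg (by rw [Gpd.eq_d_of_mul_eq_self hc he]; exact gpd.d_mem_idts h)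
      simp only [β.σ_σ hc, c.sum_σx_mul_σy hdec, if_neg hne, mul_zero]
    · simp only [σ_σ_eq_zero hdec hc, zero_mul, sum_const_zero, mul_zero]

section Pairing

variable {N : Type*} [AddCommGroup N]

theorem pairing_eq_sum (hdec : IsDecomp gpd β) (φ : R →+ R →+ N)
    (hφ : IsBalanced (fixedSet gpd β Set.univ) φ) (p q : R) :
    φ p q = ∑ i, φ (c.x i) (β.trace Set.univ (c.y i * p) * q) := by
  conv_lhs => rw [← c.sum_x_mul_trace hdec (Set.subset_univ _) p]
  rw [map_sum, AddMonoidHom.finsetSum_apply]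
  exact sum_congr rfl fun i _ => hφ _ _ _ (trace_univ_mem_fixedSet hdec _)

theorem sum_pairing_eq_sum (hdec : IsDecomp gpd β) (φ : R →+ R →+ N)
    (hφ : IsBalanced (fixedSet gpd β Set.univ) φ) {ι : Type*} (s : Finset ι) (a b : ι → R) :
    ∑ j ∈ s, φ (a j) (b j) =
      ∑ i, φ (c.x i) (∑ g, β.σ g (c.y i) * ∑ j ∈ s, β.σ g (a j) * b j) := by
  simp only [c.pairing_eq_sum hdec φ hφ (a _), trace_univ, map_mul, sum_mul, mul_sum, mul_assoc]
  rw [sum_comm]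
  refine sum_congr rfl fun i _ => ?_
  rw [← map_sum, sum_comm]

/-- Injectivity of the Galois map `R ⊗_{R^β} R → Π_g R`, `a ⊗ b ↦ (σ_g(a) b)_g`. -/
theorem sum_pairing_eq_of_sum_σ_mul_eq (c : GaloisCoords β) (hdec : IsDecomp gpd β)
    (φ : R →+ R →+ N) (hφ : IsBalanced (fixedSet gpd β Set.univ) φ) {ι κ : Type*}
    (s : Finset ι) (t : Finset κ)
    (a b : ι → R) (a' b' : κ → R)
    (h : ∀ g, ∑ j ∈ s, β.σ g (a j) * b j = ∑ l ∈ t, β.σ g (a' l) * b' l) :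
    ∑ j ∈ s, φ (a j) (b j) = ∑ l ∈ t, φ (a' l) (b' l) := by
  rw [c.sum_pairing_eq_sum hdec φ hφ s, c.sum_pairing_eq_sum hdec φ hφ t]
  simp only [h]

/-- `Σ_i x_i ⊗ y_i ∈ R ⊗_{R^β} R` commutes with `R`. -/
theorem sum_pairing_mul_x (hdec : IsDecomp gpd β) (φ : R →+ R →+ N)
    (hφ : IsBalanced (fixedSet gpd β Set.univ) φ) (w : R) :
    ∑ i, φ (w * c.x i) (c.y i) = ∑ i, φ (c.x i) (c.y i * w) := by
  refine c.sum_pairing_eq_of_sum_σ_mul_eq hdec φ hφ _ _ _ _ _ _ fun g => ?_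
  simp only [map_mul, mul_assoc, ← mul_sum]
  simp only [← mul_assoc, ← sum_mul, c.sum_σx_mul_y hdec]
  split_ifs with hg
  · rw [σ_of_mem_idts β hg, mul_assoc, β.one_idem, β.one_central]
  · rw [mul_zero, zero_mul]

end Pairing

theorem sum_map_mul_x_mul_map_y (hdec : IsDecomp gpd β) (f₁ f₂ : R →+ R)
    (hf : ∀ u v s, s ∈ fixedSet gpd β Set.univ → f₁ (u * s) * f₂ v = f₁ u * f₂ (s * v))
    (w : R) : ∑ i, f₁ (w * c.x i) * f₂ (c.y i) = ∑ i, f₁ (c.x i) * f₂ (c.y i * w) :=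
  c.sum_pairing_mul_x hdec ((AddMonoidHom.mul.comp f₁).compl₂ f₂) hf w

theorem proj_mem_Jset (hdec : IsDecomp gpd β) (hcen : fixedSet gpd β Set.univ = Set.center R)
    (g : G) (r : R) : c.proj g r ∈ Jset gpd β g := by
  refine β.mem_Jset_iff.mpr ⟨?_, fun w => ?_⟩
  · simp only [proj_apply, sum_mul, mul_assoc, σ_mul_one]
  · have h := c.sum_map_mul_x_mul_map_y hdec (AddMonoidHom.mulRight r) (β.σ g).toAddMonoidHom
      (fun u v s hs => by
        change u * s * r * β.σ g v = u * r * β.σ g (s * v)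
        rw [σ_mul_left_of_mem_fixedSet β hs, mul_assoc u s, commute_of_mem_fixedSet hcen hs]
        simp only [mul_assoc]) w
    simp only [AddMonoidHom.coe_mulRight, NonUnitalRingHom.coe_toAddMonoidHom, map_mul] at h
    simp only [proj_apply, mul_sum, sum_mul, ← mul_assoc] at h ⊢
    exact h.symm

theorem proj_of_mem_Jset (hdec : IsDecomp gpd β) {g : G} {t : R} (ht : t ∈ Jset gpd β g)
    (h : G) : c.proj h t = if g = h then t else 0 := by
  simp only [proj_apply, ← β.mul_σ_of_mem_Jset ht, mul_assoc, ← mul_sum,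
    c.sum_σx_mul_σy hdec]
  split_ifs with hgh
  · exact ht.1
  · exact mul_zero t

theorem proj_sum_of_mem_Jset (hdec : IsDecomp gpd β) {f : G → R}
    (hf : ∀ g, f g ∈ Jset gpd β g) (h : G) : c.proj h (∑ g, f g) = f h := by
  simp only [map_sum, c.proj_of_mem_Jset hdec (hf _), sum_ite_eq', mem_univ, if_true]

theorem sum_proj_eq (hdec : IsDecomp gpd β) {H : Set G} (hH : gpd.idts ⊆ H) {v : R}
    (hv : ∀ i, v * β.trace H (c.y i) = β.trace H (c.y i) * v) :
    ∑ h ∈ univ.filter (· ∈ H), c.proj h v = v := by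
  simp only [proj_apply]
  rw [sum_comm]
  simp only [← mul_sum, ← trace_apply]
  conv_rhs => rw [← one_mul v, ← c.sum_x_mul_trace hdec hH 1]
  simp only [mul_one, sum_mul, mul_assoc, hv]

theorem sum_proj (hdec : IsDecomp gpd β) (hcen : fixedSet gpd β Set.univ = Set.center R)
    (r : R) : ∑ g, c.proj g r = r := by
  simpa using c.sum_proj_eq hdec (Set.subset_univ _)
    fun i => (commute_of_mem_fixedSet hcen (trace_univ_mem_fixedSet hdec _) r).symm

theorem coproj_mem_Jset (hdec : IsDecomp gpd β) (hcen : fixedSet gpd β Set.univ = Set.center R)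
    (g : G) (r : R) : c.coproj g r ∈ Jset gpd β (gpd.inv g) := by
  have hrel : ∀ w, β.σ g w * c.coproj g r = c.coproj g r * w := by
    intro w
    have h := c.sum_map_mul_x_mul_map_y hdec
      ((AddMonoidHom.mulRight r).comp (β.σ g).toAddMonoidHom) (AddMonoidHom.id R)
      (fun u v s hs => by
        change β.σ g (u * s) * r * v = β.σ g u * r * (s * v)
        rw [σ_mul_right_of_mem_fixedSet β hs, mul_assoc _ s, commute_of_mem_fixedSet hcen hs]
        simp only [mul_assoc]) w
    change ∑ i, β.σ g (w * c.x i) * r * c.y i = ∑ i, β.σ g (c.x i) * r * (c.y i * w) at h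
    simp only [coproj_apply, mul_sum, sum_mul, map_mul, mul_assoc] at h ⊢
    exact h
  have hone : β.one g * c.coproj g r = c.coproj g r := by
    simp only [coproj_apply, mul_sum, ← mul_assoc, one_mul_σ]
  have hJ : ∀ w, c.coproj g r * β.σ (gpd.inv g) w = w * c.coproj g r := by
    intro w
    rw [← hrel, σ_σ_inv, mul_assoc, hone]
  refine β.mem_Jset_iff.mpr ⟨?_, hJ⟩
  simpa [σ_one] using hJ 1

theorem sandwich_mem_fixedSet (hdec : IsDecomp gpd β)
    (hcen : fixedSet gpd β Set.univ = Set.center R) (w : R) :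
    c.sandwich w ∈ fixedSet gpd β Set.univ := by
  refine mem_fixedSet_of_commute hcen fun u => ?_
  have h := c.sum_map_mul_x_mul_map_y hdec (AddMonoidHom.mulRight w) (AddMonoidHom.id R)
    (fun a b s hs => by
      change a * s * w * b = a * w * (s * b)
      rw [mul_assoc a s, commute_of_mem_fixedSet hcen hs]
      simp only [mul_assoc]) u
  change ∑ i, u * c.x i * w * c.y i = ∑ i, c.x i * w * (c.y i * u) at h
  simp only [sandwich_apply, mul_sum, sum_mul, mul_assoc] at h ⊢
  exact h.symm

theorem sandwich_one (hdec : IsDecomp gpd β) : c.sandwich 1 = 1 := by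
  simp only [sandwich_apply, mul_one, c.sum_x_mul_y hdec]

theorem sum_sandwich_mul_x_mul_y (hdec : IsDecomp gpd β)
    (hcen : fixedSet gpd β Set.univ = Set.center R) (w : R) :
    ∑ j, c.sandwich (w * c.x j) * c.y j = c.kappa * w := by
  have h := c.sum_map_mul_x_mul_map_y hdec c.sandwich (AddMonoidHom.id R)
    (fun a b s hs => by
      change c.sandwich (a * s) * b = c.sandwich a * (s * b)
      rw [c.sandwich_mul_of_mem_fixedSet hcen hs, mul_assoc]) w
  simp only [AddMonoidHom.id_apply] at h
  simp only [h, kappa, sum_mul, mul_assoc]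

theorem trace_kappa (hdec : IsDecomp gpd β) (hcen : fixedSet gpd β Set.univ = Set.center R) :
    β.trace Set.univ c.kappa = 1 := by
  have hxy : ∑ j, c.x j * β.trace Set.univ (c.y j) = 1 := by
    simpa using c.sum_x_mul_trace hdec (Set.subset_univ _) 1
  calc β.trace Set.univ c.kappa
      = ∑ j, c.sandwich (c.x j) * β.trace Set.univ (c.y j) := by
        rw [kappa, map_sum]
        exact sum_congr rfl fun j _ =>
          trace_mul_of_mem_fixedSet β _ (c.sandwich_mem_fixedSet hdec hcen _) _
    _ = c.sandwich (∑ j, c.x j * β.trace Set.univ (c.y j)) := by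
        rw [map_sum]
        exact sum_congr rfl fun j _ =>
          (c.sandwich_mul_of_mem_fixedSet hcen (trace_univ_mem_fixedSet hdec _) _).symm
    _ = 1 := by rw [hxy, c.sandwich_one hdec]

/-- The summands `σ_k(t)` of `tr(t)` lie in components `J_{k g k⁻¹}` not indexed by
identities, while the central element `tr(t)` has `e`-component `tr(t) 1_e`. -/
theorem trace_eq_zero_of_mem_Jset (c : GaloisCoords β) (hdec : IsDecomp gpd β)
    (hcen : fixedSet gpd β Set.univ = Set.center R) {g : G} (hg : g ∉ gpd.idts) {t : R}
    (ht : t ∈ Jset gpd β g) : β.trace Set.univ t = 0 := by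
  by_cases hloop : gpd.d g = gpd.r g
  swap
  · rw [eq_zero_of_mem_Jset hdec hcen hloop ht, map_zero]
  have hproj : ∀ e ∈ gpd.idts, c.proj e (β.trace Set.univ t) = 0 := by
    intro e he
    rw [trace_univ, map_sum]
    refine sum_eq_zero fun k _ => ?_
    by_cases hk : gpd.d k = gpd.r g
    · rw [c.proj_of_mem_Jset hdec (σ_mem_Jset_conj ht hloop hk), if_neg]
      rintro rfl
      exact hg (Gpd.conj_mem_idts hloop hk he)
    · rw [← ht.1, ← σ_mul_one_inv, mul_assoc, one_inv, one_mul_one_d_eq_zero hdec, mul_zero,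
        map_zero, map_zero]
      exact fun h => hk h.symm
  have hz : β.trace Set.univ t ∈ fixedSet gpd β Set.univ := trace_univ_mem_fixedSet hdec t
  rw [← mul_one (β.trace Set.univ t), ← sum_one_idts hdec, mul_sum]
  refine sum_eq_zero fun e he => ?_
  have h := hproj e (mem_filter.mp he).2
  rwa [c.proj_of_mem_idts (mem_filter.mp he).2, ← one_mul (β.trace Set.univ t),
    c.sandwich_mul_of_mem_fixedSet hcen hz, c.sandwich_one hdec, one_mul] at h

theorem sandwich_kappa_mul_trace_one (hdec : IsDecomp gpd β)
    (hcen : fixedSet gpd β Set.univ = Set.center R) :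
    c.sandwich c.kappa * β.trace Set.univ 1 = 1 := by
  have hterm : ∀ g, β.trace Set.univ (c.proj g c.kappa) =
      if g ∈ gpd.idts then c.sandwich c.kappa * β.trace Set.univ (β.one g) else 0 := by
    intro g
    split_ifs with hg
    · rw [c.proj_of_mem_idts hg,
        trace_mul_of_mem_fixedSet β _ (c.sandwich_mem_fixedSet hdec hcen _)]
    · exact trace_eq_zero_of_mem_Jset c hdec hcen hg (c.proj_mem_Jset hdec hcen g _)
  calc c.sandwich c.kappa * β.trace Set.univ 1
      = ∑ g, β.trace Set.univ (c.proj g c.kappa) := by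
        rw [sum_congr rfl fun g _ => hterm g, ← sum_filter, ← mul_sum, ← map_sum,
          sum_one_idts hdec]
    _ = 1 := by rw [← map_sum, c.sum_proj hdec hcen, c.trace_kappa hdec hcen]

theorem sum_coproj_mul_proj (hdec : IsDecomp gpd β)
    (hcen : fixedSet gpd β Set.univ = Set.center R) (h : G) (a : R) :
    ∑ k, c.coproj h (β.σ h a * c.x k) * c.proj h (c.y k) =
      β.σ h (c.sandwich (a * c.kappa)) := by
  calc ∑ k, c.coproj h (β.σ h a * c.x k) * c.proj h (c.y k)
      = ∑ i, ∑ j, β.σ h (c.x i) * (β.σ h a * (c.sandwich (c.y i * c.x j) * β.σ h (c.y j))) := by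
        simp only [coproj_apply, proj_apply, sandwich_apply, sum_mul, mul_sum, mul_assoc]
        exact (sum_congr rfl fun _ _ => sum_comm).trans
          (sum_comm.trans (sum_congr rfl fun _ _ => sum_comm))
    _ = ∑ i, ∑ j, β.σ h (c.x i * (a * (c.sandwich (c.y i * c.x j) * c.y j))) := by
        simp only [map_mul, σ_mul_left_of_mem_fixedSet β (c.sandwich_mem_fixedSet hdec hcen _)]
    _ = β.σ h (c.sandwich (a * c.kappa)) := by
        simp only [← map_sum, ← mul_sum, c.sum_sandwich_mul_x_mul_y hdec hcen]
        simp only [sandwich_apply, mul_assoc]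

/-- On `E_e`, `tr_H(1)` acts as the order of the vertex group of `H` at `e`, which by Lagrange
divides the order of the vertex group of `G` at `e`, by which the invertible `tr(1)` acts. -/
theorem exists_mul_trace_one_eq_one (c : GaloisCoords β) (hdec : IsDecomp gpd β)
    (hcen : fixedSet gpd β Set.univ = Set.center R) {H : Set G} (hH : gpd.IsWide H) :
    ∃ ω ∈ fixedSet gpd β Set.univ, ω * β.trace H 1 = 1 := by
  let n : Set G → G → ℕ := fun L e => Nat.card {g : G // (gpd.d g = e ∧ gpd.r g = e) ∧ g ∈ L}
  let L := c.sandwich c.kappa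
  refine ⟨∑ e ∈ univ.filter (· ∈ gpd.idts), (n Set.univ e / n H e) • (L * β.one e), ?_, ?_⟩
  · have hcenter : ∀ w ∈ fixedSet gpd β Set.univ, w ∈ Subsemiring.center R := by
      rw [hcen]
      exact fun w hw => hw
    rw [hcen]
    exact sum_mem fun e _ => nsmul_mem (mul_mem (hcenter _ (c.sandwich_mem_fixedSet hdec hcen _))
      (hcenter _ (one_mem_fixedSet hcen e))) _
  · rw [sum_mul]
    conv_rhs => rw [← sum_one_idts hdec]
    refine sum_congr rfl fun e he => ?_
    have he : e ∈ gpd.idts := (mem_filter.mp he).2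
    calc (n Set.univ e / n H e) • (L * β.one e) * β.trace H 1
        = (n Set.univ e / n H e * n H e) • (L * β.one e) := by
          rw [smul_mul_assoc, mul_assoc, β.one_central, trace_one_mul_one hdec hcen he,
            mul_smul_comm, smul_smul]
      _ = L * β.trace Set.univ 1 * β.one e := by
          rw [Nat.div_mul_cancel (Gpd.card_loops_dvd he hH), mul_assoc,
            trace_one_mul_one hdec hcen he, mul_smul_comm]
      _ = β.one e := by rw [c.sandwich_kappa_mul_trace_one hdec hcen, one_mul]

/-- `splitLeft h k ∈ J_{h⁻¹}` and `splitRight h k ∈ J_h` split `1_h` as a sum of products. -/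
noncomputable def splitLeft (h : G) (k : Fin c.n) : R :=
  c.coproj h (β.σ h (β.trace Set.univ 1) * c.x k)

theorem splitLeft_mem_Jset (hdec : IsDecomp gpd β)
    (hcen : fixedSet gpd β Set.univ = Set.center R) (h : G) (k : Fin c.n) :
    c.splitLeft h k ∈ Jset gpd β (gpd.inv h) :=
  c.coproj_mem_Jset hdec hcen h _

theorem splitRight_mem_Jset (hdec : IsDecomp gpd β)
    (hcen : fixedSet gpd β Set.univ = Set.center R) (h : G) (k : Fin c.n) :
    c.splitRight h k ∈ Jset gpd β h :=
  c.proj_mem_Jset hdec hcen h _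

theorem sum_splitLeft_mul_splitRight (hdec : IsDecomp gpd β)
    (hcen : fixedSet gpd β Set.univ = Set.center R) (h : G) :
    ∑ k, c.splitLeft h k * c.splitRight h k = β.one h := by
  have hT := trace_univ_mem_fixedSet hdec (β := β) 1
  simp only [splitLeft, splitRight]
  rw [c.sum_coproj_mul_proj hdec hcen, commute_of_mem_fixedSet hcen hT,
    c.sandwich_mul_of_mem_fixedSet hcen hT, c.sandwich_kappa_mul_trace_one hdec hcen, σ_one]

theorem one_mul_eq_zero_of_forall_proj_mul_eq_zero (hdec : IsDecomp gpd β)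
    (hcen : fixedSet gpd β Set.univ = Set.center R) {h : G} {z : R}
    (hz : ∀ b, c.proj h b * z = 0) : β.one h * z = 0 := by
  rw [← c.sum_splitLeft_mul_splitRight hdec hcen h, sum_mul]
  exact sum_eq_zero fun k _ => by rw [mul_assoc, splitRight, hz, mul_zero]

theorem isDirectSumOver_centralizer [Nonempty G] (c : GaloisCoords β) (hdec : IsDecomp gpd β)
    (hcen : fixedSet gpd β Set.univ = Set.center R) {S : Set R}
    (hfix : fixedSet gpd β (Hset gpd β S) = S) :
    IsDirectSumOver gpd β (Hset gpd β S) (Set.centralizer S) := by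
  have hH := isWide_Hset (β := β) S
  refine ⟨fun f hf hsupp s hs => ?_, fun v hv => ?_⟩
  · rw [sum_mul, mul_sum]
    refine sum_congr rfl fun g _ => ?_
    by_cases hg : g ∈ Hset gpd β S
    · exact (commute_of_mem_Jset_of_mem_Hset hg (hf g) hs).symm
    · rw [hsupp g hg, zero_mul, mul_zero]
  have hv_sum : ∑ h ∈ univ.filter (· ∈ Hset gpd β S), c.proj h v = v :=
    c.sum_proj_eq hdec hH.2 fun i =>
      (hv _ (hfix.subset (trace_mem_fixedSet hdec hH.1.2.1 hH.1.2.2 _))).symm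
  refine ⟨fun g => if g ∈ Hset gpd β S then c.proj g v else 0,
    ⟨fun g => ?_, fun g hg => if_neg hg, by rw [← sum_filter, hv_sum]⟩, ?_⟩
  · dsimp only
    split_ifs
    · exact c.proj_mem_Jset hdec hcen g v
    · exact zero_mem_Jset g
  · rintro f ⟨hf, hsupp, rfl⟩
    funext g
    split_ifs with hg
    · exact (c.proj_sum_of_mem_Jset hdec hf g).symm
    · exact hsupp g hg

theorem centralizer_centralizer (c : GaloisCoords β) (hdec : IsDecomp gpd β)
    (hcen : fixedSet gpd β Set.univ = Set.center R) {S : Set R}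
    (hfix : fixedSet gpd β (Hset gpd β S) = S) :
    Set.centralizer (Set.centralizer S) = S := by
  refine Set.Subset.antisymm (fun v hv => ?_) Set.subset_centralizer_centralizer
  rw [← hfix]
  intro h hh
  change β.σ h v = v * β.one h
  have hz : β.one h * (β.σ h v - v * β.one h) = 0 := by
    refine c.one_mul_eq_zero_of_forall_proj_mul_eq_zero hdec hcen fun b => ?_
    have hb := c.proj_mem_Jset hdec hcen h b
    rw [mul_sub, β.mul_σ_of_mem_Jset hb, ← mul_assoc, hv _ (mem_centralizer_of_mem_Jset hh hb),
      mul_assoc, hb.1, sub_self]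
  rwa [mul_sub, one_mul_σ, ← mul_assoc, β.one_central h v, mul_assoc, β.one_idem,
    sub_eq_zero] at hz

section Blocks

variable {m h : G} {t : R}

theorem mul_splitLeft_mem_Jset (hdec : IsDecomp gpd β)
    (hcen : fixedSet gpd β Set.univ = Set.center R) (ht : t ∈ Jset gpd β m)
    (hrh : gpd.r h = gpd.r m) (k : Fin c.n) :
    t * c.splitLeft h k ∈ Jset gpd β (gpd.inv (gpd.mul (gpd.inv m) h)) := by
  rw [Gpd.mul_inv_rev (by rw [gpd.d_inv, hrh]), gpd.inv_inv]
  exact mul_mem_Jset ht (c.splitLeft_mem_Jset hdec hcen h k) (by rw [gpd.d_inv, hrh])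

theorem mul_splitLeft_eq_sum (hdec : IsDecomp gpd β)
    (hcen : fixedSet gpd β Set.univ = Set.center R) (ht : t ∈ Jset gpd β m)
    (hrh : gpd.r h = gpd.r m) (k : Fin c.n) :
    t * c.splitLeft h k = ∑ l, c.splitLeft (gpd.mul (gpd.inv m) h) l *
      (c.splitRight (gpd.mul (gpd.inv m) h) l * (t * c.splitLeft h k)) := by
  have h1 := one_inv_mul_of_mem_Jset (c.mul_splitLeft_mem_Jset hdec hcen ht hrh k)
  rw [gpd.inv_inv] at h1
  simp only [← mul_assoc, ← sum_mul, c.sum_splitLeft_mul_splitRight hdec hcen]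
  rw [mul_assoc, h1]

theorem splitRight_mul_mul_splitLeft_mem_fixedSet (hdec : IsDecomp gpd β)
    (hcen : fixedSet gpd β Set.univ = Set.center R) (ht : t ∈ Jset gpd β m)
    (hrh : gpd.r h = gpd.r m) (l k : Fin c.n) :
    c.splitRight (gpd.mul (gpd.inv m) h) l * (t * c.splitLeft h k) ∈
      fixedSet gpd β Set.univ := by
  have hJ := mul_mem_Jset (c.splitRight_mem_Jset hdec hcen _ l)
    (c.mul_splitLeft_mem_Jset hdec hcen ht hrh k) (gpd.d_inv _)
  rw [gpd.inv_mul] at hJ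
  exact mem_fixedSet_of_mem_Jset_idts hcen (gpd.d_mem_idts _) hJ

theorem sum_mul_splitLeft_mul_splitRight (hdec : IsDecomp gpd β)
    (hcen : fixedSet gpd β Set.univ = Set.center R) (ht : t ∈ Jset gpd β m)
    (hrh : gpd.r h = gpd.r m) (w : R) :
    ∑ k, w * (t * c.splitLeft h k) * c.splitRight h k = w * t := by
  simp only [mul_assoc, ← mul_sum, c.sum_splitLeft_mul_splitRight hdec hcen]
  rw [β.one_r h, hrh, ← β.one_r m, ht.1]

theorem mul_splitLeft_eq_zero (hdec : IsDecomp gpd β)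
    (hcen : fixedSet gpd β Set.univ = Set.center R) (ht : t ∈ Jset gpd β m)
    (hr : gpd.r h ≠ gpd.r m) (k : Fin c.n) : t * c.splitLeft h k = 0 :=
  mul_eq_zero_of_mem_Jset hdec ht (c.splitLeft_mem_Jset hdec hcen h k)
    (by rw [gpd.d_inv]; exact Ne.symm hr)

theorem splitRight_mul_eq_zero (hdec : IsDecomp gpd β)
    (hcen : fixedSet gpd β Set.univ = Set.center R) (ht : t ∈ Jset gpd β m)
    (hloop : gpd.d m = gpd.r m) (hr : gpd.r h ≠ gpd.r m) (l : Fin c.n) :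
    c.splitRight h l * t = 0 :=
  mul_eq_zero_of_mem_Jset hdec (c.splitRight_mem_Jset hdec hcen h l) ht (by rwa [hloop])

end Blocks

section Casimir

variable (S : Set R) (ω : R)

noncomputable def casimirLeft (α : G × Fin c.n) : R :=
  if α.1 ∈ Hset gpd β S then ω * c.splitLeft α.1 α.2 else 0

noncomputable def casimirRight (α : G × Fin c.n) : R :=
  if α.1 ∈ Hset gpd β S then c.splitRight α.1 α.2 else 0

variable {S ω}

theorem casimirLeft_mem_centralizer [Nonempty G] (hdec : IsDecomp gpd β)
    (hcen : fixedSet gpd β Set.univ = Set.center R) (hω : ω ∈ fixedSet gpd β Set.univ)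
    (α : G × Fin c.n) : c.casimirLeft S ω α ∈ Subring.centralizer S := by
  unfold casimirLeft
  split_ifs with hα
  · exact mul_mem (mem_centralizer_of_mem_fixedSet hcen hω S)
      (mem_centralizer_of_mem_Jset ((isWide_Hset S).1.2.1 _ hα)
        (c.splitLeft_mem_Jset hdec hcen _ _))
  · exact zero_mem _

theorem casimirRight_mem_centralizer (hdec : IsDecomp gpd β)
    (hcen : fixedSet gpd β Set.univ = Set.center R) (α : G × Fin c.n) :
    c.casimirRight S α ∈ Subring.centralizer S := by
  unfold casimirRight
  split_ifs with hα
  · exact mem_centralizer_of_mem_Jset hα (c.splitRight_mem_Jset hdec hcen _ _)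
  · exact zero_mem _

theorem sum_casimirLeft_mul_casimirRight (hdec : IsDecomp gpd β)
    (hcen : fixedSet gpd β Set.univ = Set.center R)
    (hω : ω * β.trace (Hset gpd β S) 1 = 1) :
    ∑ α, c.casimirLeft S ω α * c.casimirRight S α = 1 := by
  have hblock : ∀ h, ∑ k, c.casimirLeft S ω (h, k) * c.casimirRight S (h, k) =
      if h ∈ Hset gpd β S then ω * β.one h else 0 := by
    intro h
    simp only [casimirLeft, casimirRight]
    split_ifs
    · simp only [mul_assoc, ← mul_sum, c.sum_splitLeft_mul_splitRight hdec hcen]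
    · simp
  rw [Fintype.sum_prod_type, sum_congr rfl fun h _ => hblock h, ← sum_filter, ← mul_sum, ← hω,
    trace_apply]
  simp only [σ_one]

end Casimir

section CentralizerPairing

variable [Nonempty G] {S : Set R} {ω : R} {N : Type*} [AddCommGroup N]
  {φ : Subring.centralizer S →+ Subring.centralizer S →+ N}
  {X Y : G × Fin c.n → Subring.centralizer S}

/-- Left multiplication by `t ∈ J_m` moves the block of the Casimir element indexed by `h`
to the block indexed by `m⁻¹ h`, up to factors in `R^β`. -/
theorem sum_pairing_mul_casimir_block (hdec : IsDecomp gpd β)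
    (hcen : fixedSet gpd β Set.univ = Set.center R) (hω : ω ∈ fixedSet gpd β Set.univ)
    (hφ : IsBalanced (Subtype.val ⁻¹' fixedSet gpd β Set.univ) φ)
    (hX : ∀ α, (X α : R) = c.casimirLeft S ω α) (hY : ∀ α, (Y α : R) = c.casimirRight S α)
    {m h : G} (hm : m ∈ Hset gpd β S) (hh : h ∈ Hset gpd β S) (hrh : gpd.r h = gpd.r m)
    (t : Subring.centralizer S) (ht : (t : R) ∈ Jset gpd β m) :
    ∑ k, φ (t * X (h, k)) (Y (h, k)) =
      ∑ l, φ (X (gpd.mul (gpd.inv m) h, l)) (Y (gpd.mul (gpd.inv m) h, l) * t) := by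
  have hg' : gpd.mul (gpd.inv m) h ∈ Hset gpd β S :=
    (isWide_Hset S).1.2.2 _ ((isWide_Hset S).1.2.1 m hm) h hh (by rw [gpd.d_inv, hrh])
  refine hφ.sum_pairing_mul_eq
    (fun l k => ⟨_, mem_centralizer_of_mem_fixedSet hcen
      (c.splitRight_mul_mul_splitLeft_mem_fixedSet hdec hcen ht hrh l k) S⟩)
    (fun l k => c.splitRight_mul_mul_splitLeft_mem_fixedSet hdec hcen ht hrh l k)
    (fun k => Subtype.ext ?_) (fun l => Subtype.ext ?_)
  · push_cast
    simp only [hX, casimirLeft, if_pos hh, if_pos hg']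
    rw [← mul_assoc, ← commute_of_mem_fixedSet hcen hω, mul_assoc]
    conv_lhs => rw [c.mul_splitLeft_eq_sum hdec hcen ht hrh, mul_sum]
    simp only [mul_assoc]
  · push_cast
    simp only [hY, casimirRight, if_pos hh, if_pos hg']
    exact c.sum_mul_splitLeft_mul_splitRight hdec hcen ht hrh _

theorem sum_pairing_mul_casimir_of_mem_Jset (hdec : IsDecomp gpd β)
    (hcen : fixedSet gpd β Set.univ = Set.center R) (hω : ω ∈ fixedSet gpd β Set.univ)
    (hφ : IsBalanced (Subtype.val ⁻¹' fixedSet gpd β Set.univ) φ)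
    (hX : ∀ α, (X α : R) = c.casimirLeft S ω α) (hY : ∀ α, (Y α : R) = c.casimirRight S α)
    {m : G} (hm : m ∈ Hset gpd β S) (t : Subring.centralizer S) (ht : (t : R) ∈ Jset gpd β m) :
    ∑ α, φ (t * X α) (Y α) = ∑ α, φ (X α) (Y α * t) := by
  by_cases hloop : gpd.d m = gpd.r m
  swap
  · obtain rfl : t = 0 := Subtype.ext (eq_zero_of_mem_Jset hdec hcen hloop ht)
    simp
  let Λ := univ.filter fun h => h ∈ Hset gpd β S ∧ gpd.r h = gpd.r m
  have hΛ : ∀ {h}, h ∉ Λ → h ∈ Hset gpd β S → gpd.r h ≠ gpd.r m := fun hh hH hr =>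
    hh (mem_filter.mpr ⟨mem_univ _, hH, hr⟩)
  have hXzero : ∀ h ∉ Λ, ∀ k, t * X (h, k) = 0 := by
    intro h hh k
    apply Subtype.ext
    push_cast
    simp only [hX, casimirLeft]
    split_ifs with hH
    · rw [← mul_assoc, ← commute_of_mem_fixedSet hcen hω, mul_assoc,
        c.mul_splitLeft_eq_zero hdec hcen ht (hΛ hh hH), mul_zero]
    · rw [mul_zero]
  have hYzero : ∀ h ∉ Λ, ∀ l, Y (h, l) * t = 0 := by
    intro h hh l
    apply Subtype.ext
    push_cast
    simp only [hY, casimirRight]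
    split_ifs with hH
    · exact c.splitRight_mul_eq_zero hdec hcen ht hloop (hΛ hh hH) l
    · rw [zero_mul]
  rw [Fintype.sum_prod_type, Fintype.sum_prod_type,
    ← sum_subset (subset_univ Λ) fun h _ hh => sum_eq_zero fun k _ => by
      rw [hXzero h hh k, map_zero, AddMonoidHom.zero_apply],
    ← sum_subset (subset_univ Λ) fun h _ hh => sum_eq_zero fun l _ => by
      rw [hYzero h hh l, map_zero]]
  refine (sum_congr rfl fun h hh => ?_).trans (Gpd.sum_comp_inv_mul (isWide_Hset S).1 hm hloop
    fun h => ∑ l, φ (X (h, l)) (Y (h, l) * t))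
  obtain ⟨hH, hrh⟩ := (mem_filter.mp hh).2
  exact c.sum_pairing_mul_casimir_block hdec hcen hω hφ hX hY hm hH hrh t ht

end CentralizerPairing

/-- `Σ_α casimirLeft α ⊗ casimirRight α` is a separability idempotent of `V_R(S)` over `R^β`:
centrality is checked on each component `J_m`, `m ∈ H_S`, of an element of `V_R(S)`. -/
theorem subSepOver_centralizer [Nonempty G] (c : GaloisCoords β) (hdec : IsDecomp gpd β)
    (hcen : fixedSet gpd β Set.univ = Set.center R) {S : Set R}
    (hfix : fixedSet gpd β (Hset gpd β S) = S) :
    SubSepOver.{_, v} (Subring.centralizer S) (fixedSet gpd β Set.univ) := by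
  have hH := isWide_Hset (β := β) S
  obtain ⟨ω, hω, hω1⟩ := c.exists_mul_trace_one_eq_one hdec hcen hH
  let X : G × Fin c.n → Subring.centralizer S :=
    fun α => ⟨c.casimirLeft S ω α, c.casimirLeft_mem_centralizer hdec hcen hω α⟩
  let Y : G × Fin c.n → Subring.centralizer S :=
    fun α => ⟨c.casimirRight S α, c.casimirRight_mem_centralizer hdec hcen α⟩
  refine subSepOver_of_fintype X Y (c.sum_casimirLeft_mul_casimirRight hdec hcen hω1)
    fun N _ φ hφ a => ?_
  let a' : G → Subring.centralizer S := fun m =>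
    ⟨if m ∈ Hset gpd β S then c.proj m a else 0, by
      split_ifs with hm
      · exact mem_centralizer_of_mem_Jset hm (c.proj_mem_Jset hdec hcen m a)
      · exact zero_mem _⟩
  have ha : a = ∑ m, a' m := by
    apply Subtype.ext
    push_cast
    rw [← sum_filter, c.sum_proj_eq hdec hH.2 fun i =>
      (a.2 _ (hfix.subset (trace_mem_fixedSet hdec hH.1.2.1 hH.1.2.2 _))).symm]
  have hcomp : ∀ m, ∑ α, φ (a' m * X α) (Y α) = ∑ α, φ (X α) (Y α * a' m) := by
    intro m
    by_cases hm : m ∈ Hset gpd β S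
    · refine c.sum_pairing_mul_casimir_of_mem_Jset hdec hcen hω hφ (fun _ => rfl)
        (fun _ => rfl) hm (a' m) ?_
      simp only [a', if_pos hm]
      exact c.proj_mem_Jset hdec hcen m a
    · obtain h0 : a' m = 0 := Subtype.ext (if_neg hm)
      simp [h0]
  rw [ha]
  simp only [sum_mul, mul_sum, map_sum, AddMonoidHom.finsetSum_apply]
  rw [sum_comm, sum_congr rfl fun m _ => hcomp m, sum_comm]

end GaloisCoords

end Coordinates

/-- Theorem 4.1: if `R` is a central `β`-Galois algebra satisfying
the fundamental theorem, then for any subalgebra `S` of `R` separable over `R^β`,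
`V_R(S) = ⊕_{g ∈ H_S} J_g` and `S = ⊕_{g ∈ H_{S'}} J_g`, where `S' = V_R(S)`. -/
theorem directSum_of_fundamental_theorem {K : Type*} [CommRing K] {R : Type u}
    [Ring R] [Algebra K R] {G : Type*} [Fintype G] [Nonempty G]
    (gpd : Gpd G) (β : GpdAct K R gpd)
    (hdec : IsDecomp gpd β) (hgal : IsGaloisExt gpd β)
    (hcen : fixedSet gpd β Set.univ = Set.center R)
    (hFT : SatisfiesFT.{u, v} gpd β)
    (S : Subring R) (hRS : fixedSet gpd β Set.univ ⊆ (S : Set R))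
    (hsep : SubSepOver.{u, v} S (fixedSet gpd β Set.univ)) :
    IsDirectSumOver gpd β (Hset gpd β (S : Set R))
      (Set.centralizer (S : Set R)) ∧
    IsDirectSumOver gpd β (Hset gpd β (Set.centralizer (S : Set R)))
      (S : Set R) := by
  obtain ⟨n, x, y, hxy⟩ := hgal
  let c : GaloisCoords β := ⟨n, x, y, hxy⟩
  have hfix : ∀ A : Subring R, fixedSet gpd β Set.univ ⊆ (A : Set R) →
      SubSepOver.{u, v} A (fixedSet gpd β Set.univ) →
      fixedSet gpd β (Hset gpd β (A : Set R)) = A := by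
    intro A hRA hsepA
    obtain ⟨H, -, hH⟩ := hFT.2.2 A hRA hsepA
    rw [← hH, GpdAct.fixedSet_Hset_fixedSet]
  have hfixS := hfix S hRS hsep
  have hfixS' := hfix (Subring.centralizer S)
    (fun w hw => GpdAct.mem_centralizer_of_mem_fixedSet hcen hw S)
    (c.subSepOver_centralizer hdec hcen hfixS)
  refine ⟨c.isDirectSumOver_centralizer hdec hcen hfixS, ?_⟩
  rw [Subring.coe_centralizer] at hfixS'
  simpa only [c.centralizer_centralizer hdec hcen hfixS] using
    c.isDirectSumOver_centralizer hdec hcen hfixS'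
end

section
/- Under the standing hypotheses, the commutator of R (embedded via ψ(r) = Σ_{e∈G₀} r1_e δ_e) in the skew groupoid ring R ⋆_β G equals ⊕_{g∈G} J_g δ_g; that is, an element Σ_{g∈G} r_g δ_g of R ⋆_β G commutes with ψ(x) for all x ∈ R if and only if r_g ∈ J_g for every g ∈ G. -/
open scoped BigOperators

attribute [local instance] Classical.propDecidable

universe u v w

/-- Multiplication in the skew groupoid ring `R ⋆_β G = ⊕_{g ∈ G} E_g δ_g`, on
coefficient functions: `(x δ_g)(y δ_h) = x β_g(y 1_{g⁻¹}) δ_{gh}` if `d g = r h`,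
and `0` otherwise. -/
noncomputable def skewMul {K : Type*} [CommRing K] {R : Type*} [Ring R] [Algebra K R]
    {G : Type*} [Fintype G] (gpd : Gpd G) (β : GpdAct K R gpd)
    (f₁ f₂ : G → R) : G → R :=
  fun k => ∑ p : G × G,
    if gpd.d p.1 = gpd.r p.2 ∧ gpd.mul p.1 p.2 = k then
      f₁ p.1 * β.act p.1 (f₂ p.2 * β.one (gpd.inv p.1))
    else 0

/-- The embedding `ψ : R → R ⋆_β G`, `ψ(x) = Σ_{e ∈ G₀} x 1_e δ_e`, on
coefficient functions. -/
noncomputable def skewPsi {K : Type*} [CommRing K] {R : Type*} [Ring R] [Algebra K R]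
    {G : Type*} [Fintype G] (gpd : Gpd G) (β : GpdAct K R gpd) (x : R) : G → R :=
  fun k => if k ∈ gpd.idts then x * β.one k else 0

section Helpers

variable {K : Type*} [CommRing K] {R : Type*} [Ring R] [Algebra K R]
  {G : Type*} [Fintype G] (gpd : Gpd G) (β : GpdAct K R gpd)

lemma act_zero' (g : G) : β.act g (0 * β.one (gpd.inv g)) = 0 := by
  have h := β.act_add g 0 0
  rw [add_zero] at h
  exact add_eq_left.mp h.symm

lemma one_d_eq_one_inv (k : G) : β.one (gpd.d k) = β.one (gpd.inv k) := by
  rw [β.one_r (gpd.inv k), gpd.r_inv]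

lemma lhs_eval (f : G → R) (x : R) (k : G) :
    skewMul gpd β f (skewPsi gpd β x) k = f k * β.act k (x * β.one (gpd.inv k)) := by
  unfold skewMul
  rw [Finset.sum_eq_single (k, gpd.d k)]
  · simp only [skewPsi]
    rw [if_pos ⟨(gpd.r_d k).symm, gpd.mul_d k⟩,
      if_pos (show gpd.d k ∈ gpd.idts from ⟨k, rfl⟩)]
    have harg : x * β.one (gpd.d k) * β.one (gpd.inv k) = x * β.one (gpd.inv k) := by
      rw [one_d_eq_one_inv gpd β, mul_assoc, β.one_idem]
    rw [harg]
  · intro p _ hp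
    split_ifs with hc
    · by_cases hid : p.2 ∈ gpd.idts
      · exfalso
        obtain ⟨g, hg⟩ := hid
        have h2 : gpd.r p.2 = p.2 := by rw [← hg, gpd.r_d]
        have h1 : gpd.d p.1 = p.2 := hc.1.trans h2
        have hk : p.1 = k := by rw [← hc.2, ← h1, gpd.mul_d]
        exact hp (Prod.ext hk (by rw [← h1, hk]))
      · simp only [skewPsi, if_neg hid]
        rw [act_zero' gpd β, mul_zero]
    · rfl
  · intro h; exact absurd (Finset.mem_univ _) h

lemma rhs_eval (f : G → R) (hf : ∀ g, f g * β.one g = f g) (x : R) (k : G) :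
    skewMul gpd β (skewPsi gpd β x) f k = x * f k := by
  have hrk : gpd.r k = gpd.d (gpd.inv k) := (gpd.d_inv k).symm
  have hrmem : gpd.r k ∈ gpd.idts := show gpd.r k ∈ gpd.idts from ⟨gpd.inv k, gpd.d_inv k⟩
  have hinv : gpd.inv (gpd.r k) = gpd.r k := by rw [hrk, gpd.inv_d]
  have hd : gpd.d (gpd.r k) = gpd.r k := by rw [hrk, gpd.d_d]
  unfold skewMul
  rw [Finset.sum_eq_single (gpd.r k, k)]
  · simp only [skewPsi]
    rw [if_pos ⟨hd, gpd.r_mul_self k⟩, if_pos hrmem, hinv]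
    have hact : β.act (gpd.r k) (f k * β.one (gpd.r k)) = f k * β.one (gpd.r k) := by
      rw [hrk]; exact β.act_id (gpd.inv k) (f k)
    rw [hact, ← β.one_r k, hf k, mul_assoc, β.one_central, hf k]
  · intro p _ hp
    split_ifs with hc
    · by_cases hid : p.1 ∈ gpd.idts
      · exfalso
        obtain ⟨g, hg⟩ := hid
        have h2 : gpd.d p.1 = p.1 := by rw [← hg, gpd.d_d]
        have h1 : p.1 = gpd.r p.2 := h2.symm.trans hc.1
        have hk : p.2 = k := by rw [← hc.2, h1, gpd.r_mul_self]
        exact hp (Prod.ext (by rw [h1, hk]) hk)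
      · simp only [skewPsi, if_neg hid, zero_mul]
    · rfl
  · intro h; exact absurd (Finset.mem_univ _) h

end Helpers

/-- Step 4 of Lemma 3.1: the commutator of `ψ(R)` in the skew
groupoid ring `R ⋆_β G` is `⊕_{g ∈ G} J_g δ_g`: an element `Σ_g r_g δ_g`
(with `r_g ∈ E_g`) commutes with all `ψ(x)` iff `r_g ∈ J_g` for every `g`. -/
theorem skew_commutant_iff_Jset {K : Type*} [CommRing K] {R : Type*} [Ring R]
    [Algebra K R] {G : Type*} [Fintype G] [Nonempty G]
    (gpd : Gpd G) (β : GpdAct K R gpd)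
    (hdec : IsDecomp gpd β) (hgal : IsGaloisExt gpd β)
    (f : G → R) (hf : ∀ g : G, f g * β.one g = f g) :
    (∀ x : R, skewMul gpd β f (skewPsi gpd β x) = skewMul gpd β (skewPsi gpd β x) f)
      ↔ ∀ g : G, f g ∈ Jset gpd β g := by
  constructor
  · intro h g
    refine ⟨hf g, fun x => ?_⟩
    have hx := congrFun (h x) g
    rw [lhs_eval gpd β f x g, rhs_eval gpd β f hf x g] at hx
    exact hx
  · intro h x
    funext k
    rw [lhs_eval gpd β f x k, rhs_eval gpd β f hf x k]
    exact (h k).2 x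
end

section
/- Under the standing hypotheses, for every g, h ∈ G with d(g) = r(h), one has J_h J_g ⊆ J_{gh}; that is, if r_h ∈ J_h and r_g ∈ J_g, then r_h r_g ∈ J_{gh}. -/
open scoped BigOperators

attribute [local instance] Classical.propDecidable

universe u v w

/-- part of Lemma 3.4: whenever `d g = r h`, one has
`J_h J_g ⊆ J_{gh}`: if `r_h ∈ J_h` and `r_g ∈ J_g` then `r_h r_g ∈ J_{gh}`. -/
theorem Jset_mul_subset {K : Type*} [CommRing K] {R : Type*} [Ring R]
    [Algebra K R] {G : Type*} [Fintype G] [Nonempty G]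
    (gpd : Gpd G) (β : GpdAct K R gpd) (hdec : IsDecomp gpd β)
    (g h : G) (hgh : gpd.d g = gpd.r h)
    (rh rg : R) (hrh : rh ∈ Jset gpd β h) (hrg : rg ∈ Jset gpd β g) :
    rh * rg ∈ Jset gpd β (gpd.mul g h) := by
  obtain ⟨hrh1, hrh2⟩ := hrh
  obtain ⟨hrg1, hrg2⟩ := hrg
  have hone : β.one (gpd.mul g h) = β.one g := by
    rw [β.one_r (gpd.mul g h), gpd.r_mul g h hgh, ← β.one_r g]
  have honeinv : β.one (gpd.inv (gpd.mul g h)) = β.one (gpd.inv h) := by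
    rw [β.one_r (gpd.inv (gpd.mul g h)), gpd.r_inv, gpd.d_mul g h hgh,
      β.one_r (gpd.inv h), gpd.r_inv]
  constructor
  · rw [hone, mul_assoc, hrg1]
  · intro x
    rw [honeinv, ← β.act_comp g h x hgh]
    have hmem := β.act_mem h x
    calc rh * rg * β.act g (β.act h (x * β.one (gpd.inv h)) * β.one (gpd.inv g))
        = rh * (rg * β.act g (β.act h (x * β.one (gpd.inv h)) * β.one (gpd.inv g))) := by
          rw [mul_assoc]
      _ = rh * (β.act h (x * β.one (gpd.inv h)) * rg) := by
          rw [hrg2 (β.act h (x * β.one (gpd.inv h)))]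
      _ = (rh * β.act h (x * β.one (gpd.inv h))) * rg := by rw [mul_assoc]
      _ = x * (rh * rg) := by rw [hrh2 x, mul_assoc]
end

section
/- Under the standing hypotheses, let H and L be subgroupoids of G with R^{β_H} = R^{β_L}, and let H∨L = ⟨H ∪ L⟩ be the subgroupoid of G generated by H ∪ L. Then R^{β_{H∨L}} = R^{β_H} = R^{β_L}. -/
open scoped BigOperators

attribute [local instance] Classical.propDecidable

universe u v w

/-- Step 2 of Lemma 3.2: if `H`, `L` are subgroupoids with
`R^{β_H} = R^{β_L}`, then `R^{β_{H∨L}} = R^{β_H} = R^{β_L}`, where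
`H ∨ L = ⟨H ∪ L⟩`. -/
theorem fixedSet_sup_eq {K : Type*} [CommRing K] {R : Type*} [Ring R]
    [Algebra K R] {G : Type*} [Fintype G] [Nonempty G]
    (gpd : Gpd G) (β : GpdAct K R gpd) (hdec : IsDecomp gpd β)
    (H L : Set G) (hH : gpd.IsSubgpd H) (hL : gpd.IsSubgpd L)
    (hfix : fixedSet gpd β H = fixedSet gpd β L) :
    fixedSet gpd β (gpd.gen (H ∪ L)) = fixedSet gpd β H ∧
    fixedSet gpd β (gpd.gen (H ∪ L)) = fixedSet gpd β L := by
  set S := fixedSet gpd β H with hS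
  have one_eq : ∀ g h : G, gpd.r g = gpd.r h → β.one g = β.one h := by
    intro g h e; rw [β.one_r g, β.one_r h, e]
  have one_inv_d : ∀ g : G, β.one (gpd.inv g) = β.one (gpd.d g) := by
    intro g; exact one_eq _ _ (by rw [gpd.r_inv, gpd.r_d])
  -- Hset S is a subgroupoid
  have hsub : gpd.IsSubgpd (Hset gpd β S) := by
    obtain ⟨h0, hh0⟩ := hH.1
    refine ⟨⟨h0, fun s hs => hs h0 hh0⟩, ?_, ?_⟩
    · -- closed under inverses
      intro g hg s hs
      have hinv : β.act g (s * β.one (gpd.inv g)) = s * β.one g := hg s hs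
      have hcomp := β.act_comp (gpd.inv g) g s (gpd.d_inv g)
      rw [gpd.inv_mul] at hcomp
      have h1 : β.one (gpd.inv (gpd.inv g)) = β.one g := by
        rw [gpd.inv_inv]
      rw [hinv, h1] at hcomp
      have h2 : s * β.one g * β.one g = s * β.one g := by
        rw [mul_assoc, β.one_idem]
      rw [h2] at hcomp
      have h3 : β.act (gpd.d g) (s * β.one (gpd.inv g)) = s * β.one (gpd.inv g) := by
        rw [one_inv_d g]; exact β.act_id g s
      rw [h3] at hcomp
      rw [gpd.inv_inv]
      exact hcomp
    · -- closed under products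
      intro g hg h hh hd s hs
      have h1 : β.one (gpd.inv (gpd.mul g h)) = β.one (gpd.inv h) :=
        one_eq _ _ (by rw [gpd.r_inv, gpd.r_inv, gpd.d_mul g h hd])
      have h2 : β.one (gpd.mul g h) = β.one g :=
        one_eq _ _ (gpd.r_mul g h hd)
      rw [h1, h2, ← β.act_comp g h s hd, hh s hs]
      have h3 : β.one h = β.one (gpd.inv g) :=
        one_eq _ _ (by rw [gpd.r_inv, hd])
      have h4 : s * β.one h * β.one (gpd.inv g) = s * β.one (gpd.inv g) := by
        rw [h3, mul_assoc, β.one_idem]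
      rw [h4]
      exact hg s hs
  have hHL : H ∪ L ⊆ Hset gpd β S := by
    rintro g (hg | hg) s hs
    · exact hs g hg
    · rw [hfix] at hs; exact hs g hg
  have hgen : gpd.gen (H ∪ L) ⊆ Hset gpd β S := by
    intro g hg
    exact hg (Hset gpd β S) ⟨hsub, hHL⟩
  have hXgen : H ∪ L ⊆ gpd.gen (H ∪ L) := by
    intro g hg T hT
    exact hT.2 hg
  have main : fixedSet gpd β (gpd.gen (H ∪ L)) = fixedSet gpd β H := by
    apply Set.Subset.antisymm
    · intro s hs g hg
      exact hs g (hXgen (Or.inl hg))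
    · intro s hs g hg
      exact hgen hg s hs
  exact ⟨main, main.trans hfix⟩
end
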